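/- arXiv:2202.12518 — 11 statements merged into one kernel-verified Lean document; each statement's English description precedes it below -/
import Mathlib

section
/- Let φ : ℝ^m → ℝ^n be the linear map sending the standard basis vector e_y (indexed by complexes y ∈ C) to y, and let D = span{e_{y'} - e_y : y → y' ∈ R}. Then the restriction of φ to D is surjective onto the stoichiometric subspace S, and dim ker(φ|_D) equals the deficiency δ = m - ℓ - dim S. In particular, φ|_D is an isomorphism onto S if and only if δ = 0. -/
/-- Let `φ : ℝ^m → ℝ^n` send the basis vector `e_y` (indexed by
complexes `y ∈ C`) to `y`, and let `D = span{e_{y'} - e_y : y → y' ∈ R}`.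
Then `φ` maps `D` onto the stoichiometric subspace `S`,
`dim ker (φ|_D) = m - ℓ - dim S` (the deficiency), and in particular `φ|_D`
is an isomorphism onto `S` iff the deficiency is zero, i.e. `m = ℓ + dim S`. -/
theorem phi_restricted_deficiency (n : ℕ)
    (C : Finset (Fin n → ℤ)) (R : Finset ((Fin n → ℤ) × (Fin n → ℤ)))
    (hCnn : ∀ y ∈ C, (0 : Fin n → ℤ) ≤ y)
    (hR : ∀ e ∈ R, e.1 ∈ C ∧ e.2 ∈ C ∧ e.1 ≠ e.2)
    (hcover : ∀ y ∈ C, ∃ e ∈ R, e.1 = y ∨ e.2 = y)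
    (G : SimpleGraph {y // y ∈ C})
    (hG : ∀ a b : {y // y ∈ C}, G.Adj a b ↔
      (((a : Fin n → ℤ), (b : Fin n → ℤ)) ∈ R ∨
        ((b : Fin n → ℤ), (a : Fin n → ℤ)) ∈ R))
    (φ : ({y // y ∈ C} → ℝ) →ₗ[ℝ] (Fin n → ℝ))
    (hφ : ∀ v : {y // y ∈ C} → ℝ,
      φ v = fun i => ∑ y : {y // y ∈ C}, v y * (((y : Fin n → ℤ) i : ℤ) : ℝ))
    (D : Submodule ℝ ({y // y ∈ C} → ℝ))
    (hD : D = Submodule.span ℝ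
      {w : {y // y ∈ C} → ℝ | ∃ e ∈ R, ∃ (h1 : e.1 ∈ C) (h2 : e.2 ∈ C),
        w = Pi.single (⟨e.2, h2⟩ : {y // y ∈ C}) (1 : ℝ)
            - Pi.single (⟨e.1, h1⟩ : {y // y ∈ C}) (1 : ℝ)})
    (S : Submodule ℝ (Fin n → ℝ))
    (hS : S = Submodule.span ℝ
      {v : Fin n → ℝ | ∃ e ∈ R, v = fun i => ((e.2 i - e.1 i : ℤ) : ℝ)}) :
    Submodule.map φ D = S ∧
    Module.finrank ℝ (LinearMap.ker (φ.domRestrict D))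
      = C.card - Nat.card G.ConnectedComponent - Module.finrank ℝ S ∧
    (Function.Injective (φ.domRestrict D)
      ↔ C.card = Nat.card G.ConnectedComponent + Module.finrank ℝ S) := by
  classical
  haveI : Fintype G.ConnectedComponent := Fintype.ofFinite _
  -- φ on basis vectors
  have hφ1 : ∀ y : {y // y ∈ C}, φ (Pi.single y 1) = fun i => (((y : Fin n → ℤ) i : ℤ) : ℝ) := by
    intro y
    rw [hφ]
    funext i
    rw [Finset.sum_eq_single y]
    · simp
    · intro b _ hb; simp [Pi.single_apply, hb]
    · simp
  -- part 1
  have hmap : Submodule.map φ D = S := by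
    rw [hD, hS, Submodule.map_span]
    congr 1
    ext v
    constructor
    · rintro ⟨w, ⟨e, he, h1, h2, rfl⟩, rfl⟩
      exact ⟨e, he, by rw [map_sub, hφ1, hφ1]; funext i; simp only [Pi.sub_apply]; push_cast; ring⟩
    · rintro ⟨e, he, rfl⟩
      obtain ⟨h1, h2, -⟩ := hR e he
      exact ⟨_, ⟨e, he, h1, h2, rfl⟩, by rw [map_sub, hφ1, hφ1]; funext i; simp only [Pi.sub_apply]; push_cast; ring⟩
  -- the component-sum map ψ
  set ψ : ({y // y ∈ C} → ℝ) →ₗ[ℝ] (G.ConnectedComponent → ℝ) :=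
    { toFun := fun x c => ∑ y ∈ Finset.univ.filter (fun y => G.connectedComponentMk y = c), x y
      map_add' := by intro x y; funext c; simp [Finset.sum_add_distrib]
      map_smul' := by intro r x; funext c; simp [Finset.mul_sum] } with hψdef
  have hψ_single : ∀ a : {y // y ∈ C}, ψ (Pi.single a (1 : ℝ)) = Pi.single (G.connectedComponentMk a) 1 := by
    intro a
    funext c
    show (∑ y ∈ Finset.univ.filter (fun y => G.connectedComponentMk y = c),
      Pi.single a (1 : ℝ) y) = _
    simp [Pi.single_apply, Finset.sum_ite_eq', eq_comm]
  -- adjacency gives differences in D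
  have hadj : ∀ a b : {y // y ∈ C}, G.Adj a b → (Pi.single a 1 - Pi.single b 1 : {y // y ∈ C} → ℝ) ∈ D := by
    intro a b hab
    rcases (hG a b).mp hab with h | h
    · have : (Pi.single b 1 - Pi.single a 1 : {y // y ∈ C} → ℝ) ∈ D := by
        rw [hD]
        exact Submodule.subset_span ⟨((a : Fin n → ℤ), (b : Fin n → ℤ)), h, a.2, b.2, by simp⟩
      simpa using D.neg_mem this
    · rw [hD]
      exact Submodule.subset_span ⟨((b : Fin n → ℤ), (a : Fin n → ℤ)), h, b.2, a.2, by simp⟩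
  have hstep : ∀ a b : {y // y ∈ C}, G.Reachable a b →
      (Pi.single a 1 - Pi.single b 1 : {y // y ∈ C} → ℝ) ∈ D := by
    intro a b hr
    obtain ⟨p⟩ := hr
    induction p with
    | nil => simp
    | @cons u w b h p ih =>
      have : (Pi.single u 1 - Pi.single b 1 : {y // y ∈ C} → ℝ)
          = (Pi.single u 1 - Pi.single w 1) + (Pi.single w 1 - Pi.single b 1) := by abel
      rw [this]
      exact D.add_mem (hadj _ _ h) ih
  -- D = ker ψ
  have hDker : D = LinearMap.ker ψ := by
    apply le_antisymm
    · rw [hD, Submodule.span_le]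
      rintro w ⟨e, he, h1, h2, rfl⟩
      have hadj' : G.Adj ⟨e.1, h1⟩ ⟨e.2, h2⟩ := (hG _ _).mpr (Or.inl (by simpa using he))
      have : G.connectedComponentMk (⟨e.1, h1⟩ : {y // y ∈ C}) = G.connectedComponentMk ⟨e.2, h2⟩ :=
        SimpleGraph.ConnectedComponent.sound hadj'.reachable
      simp only [SetLike.mem_coe, LinearMap.mem_ker, map_sub, hψ_single, this, sub_self]
    · intro x hx
      have hx' : ∀ c : G.ConnectedComponent,
          (∑ y ∈ Finset.univ.filter (fun y => G.connectedComponentMk y = c), x y) = 0 :=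
        fun c => congrFun (LinearMap.mem_ker.mp hx) c
      have hxsum : x = ∑ y : {y // y ∈ C}, x y • (Pi.single y 1 : {y // y ∈ C} → ℝ) := by
        funext j
        simp [Pi.single_apply, Finset.sum_ite_eq, mul_ite]
      have h2 : (∑ y : {y // y ∈ C}, x y • (Pi.single ((G.connectedComponentMk y).out) 1 : {y // y ∈ C} → ℝ)) = 0 := by
        rw [← Finset.sum_fiberwise_of_maps_to
          (g := fun y : {y // y ∈ C} => G.connectedComponentMk y) (t := Finset.univ)
          (fun _ _ => Finset.mem_univ _)]
        refine Finset.sum_eq_zero fun c _ => ?_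
        have : (∑ y ∈ Finset.univ.filter (fun y => G.connectedComponentMk y = c),
            x y • (Pi.single ((G.connectedComponentMk y).out) 1 : {y // y ∈ C} → ℝ))
            = ∑ y ∈ Finset.univ.filter (fun y => G.connectedComponentMk y = c),
              x y • (Pi.single (c.out) 1 : {y // y ∈ C} → ℝ) := by
          refine Finset.sum_congr rfl fun y hy => ?_
          rw [(Finset.mem_filter.mp hy).2]
        rw [this, ← Finset.sum_smul, hx' c, zero_smul]
      have hxd : x = ∑ y : {y // y ∈ C}, x y •
          ((Pi.single y 1 : {y // y ∈ C} → ℝ) - Pi.single ((G.connectedComponentMk y).out) 1) := by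
        conv_lhs => rw [hxsum]
        rw [← sub_zero (∑ y : {y // y ∈ C}, x y • (Pi.single y 1 : {y // y ∈ C} → ℝ)), ← h2, ← Finset.sum_sub_distrib]
        exact Finset.sum_congr rfl fun y _ => by rw [smul_sub]
      rw [hxd]
      refine D.sum_mem fun y _ => D.smul_mem _ ?_
      refine hstep _ _ ?_
      exact (SimpleGraph.ConnectedComponent.eq.mp (Quot.out_eq _).symm)
  -- ψ is surjective
  have hψsurj : LinearMap.range ψ = ⊤ := by
    rw [LinearMap.range_eq_top]
    intro f
    refine ⟨∑ c : G.ConnectedComponent, f c • (Pi.single c.out 1 : {y // y ∈ C} → ℝ), ?_⟩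
    rw [map_sum]
    funext c
    have : ∀ c' : G.ConnectedComponent,
        ψ (f c' • (Pi.single c'.out 1 : {y // y ∈ C} → ℝ))
          = f c' • (Pi.single c' 1 : G.ConnectedComponent → ℝ) := by
      intro c'
      rw [map_smul, hψ_single]
      exact congrArg (fun c => f c' • (Pi.single c (1:ℝ) : G.ConnectedComponent → ℝ)) (Quot.out_eq c')
    simp only [this]
    simp [Pi.single_apply, Finset.sum_ite_eq, mul_ite]
  -- dimension bookkeeping
  have hcardV : Fintype.card {y // y ∈ C} = C.card := Fintype.card_coe C
  have hNat : Nat.card G.ConnectedComponent = Fintype.card G.ConnectedComponent :=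
    Nat.card_eq_fintype_card
  have hrnψ := LinearMap.finrank_range_add_finrank_ker ψ
  rw [hψsurj, finrank_top, Module.finrank_fintype_fun_eq_card,
    Module.finrank_fintype_fun_eq_card] at hrnψ
  -- hrnψ : card components + finrank (ker ψ) = card V
  have hDrank : Module.finrank ℝ D = Module.finrank ℝ (LinearMap.ker ψ) := by rw [hDker]
  have hrange : LinearMap.range (φ.domRestrict D) = Submodule.map φ D ⊓ ⊤ := by
    simp [LinearMap.range_domRestrict, Submodule.map_comap_eq]
  have hrange' : Module.finrank ℝ (LinearMap.range (φ.domRestrict D)) = Module.finrank ℝ S := by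
    rw [LinearMap.range_domRestrict, hmap]
  have hrnφ := LinearMap.finrank_range_add_finrank_ker (φ.domRestrict D)
  rw [hrange'] at hrnφ
  -- hrnφ : finrank S + finrank (ker φ|D) = finrank D
  have hsle : Module.finrank ℝ S + Module.finrank ℝ (LinearMap.ker (φ.domRestrict D))
      = Module.finrank ℝ D := hrnφ
  refine ⟨hmap, ?_, ?_⟩
  · rw [hNat, ← hcardV]
    omega
  · rw [← LinearMap.ker_eq_bot, ← Submodule.finrank_eq_zero, hNat, ← hcardV]
    omega
end

section
/- If f_1, ..., f_h are copies of a reaction network, each node balanced with respect to (Λ, ν) for a σ-finite measure ν, then ν is a stationary measure for the continuous-time Markov chain on ℤ^n_{≥0} with transition rates q(x,x') = Σ_{i=1}^h Σ_{y→y'∈R : f_i(y)=x, f_i(y')=x'} λ_{y→y'}(x); that is, ν(x) Σ_{x'} q(x,x') = Σ_{x'} ν(x') q(x',x) for every state x. -/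
/-- If `f_1, …, f_h` are copies of a reaction network, each node
balanced with respect to `(Λ, ν)`, then `ν` is a stationary measure for the
CTMC on `ℤ^n_{≥0}` with rates
`q(x,x') = Σ_{i=1}^h Σ_{y→y'∈R : f_i(y)=x, f_i(y')=x'} λ_{y→y'}(x)`:
for every state `x`, `ν(x) Σ_{x'} q(x,x') = Σ_{x'} ν(x') q(x',x)`. -/
theorem union_of_copies_stationary (n h : ℕ) [DecidableEq (Fin n → ℤ)]
    (C : Finset (Fin n → ℤ)) (R : Finset ((Fin n → ℤ) × (Fin n → ℤ)))
    (hCnn : ∀ y ∈ C, (0 : Fin n → ℤ) ≤ y)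
    (hR : ∀ e ∈ R, e.1 ∈ C ∧ e.2 ∈ C ∧ e.1 ≠ e.2)
    (Λ : (Fin n → ℤ) × (Fin n → ℤ) → (Fin n → ℤ) → ℝ)
    (hΛnn : ∀ e ∈ R, ∀ x : Fin n → ℤ, 0 ≤ Λ e x)
    (ν : (Fin n → ℤ) → ℝ) (hνnn : ∀ x, 0 ≤ ν x)
    (f : Fin h → (Fin n → ℤ) → (Fin n → ℤ))
    (hfnn : ∀ i, ∀ z ∈ C, (0 : Fin n → ℤ) ≤ f i z)
    (hcopy : ∀ i, ∀ e ∈ R, f i e.2 - f i e.1 = e.2 - e.1)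
    (hnb : ∀ i, ∀ x ∈ C.image (f i),
      ν x * ∑ e ∈ R.filter (fun e => f i e.1 = x), Λ e x
        = ∑ e ∈ R.filter (fun e => f i e.2 = x), ν (f i e.1) * Λ e (f i e.1))
    (q : (Fin n → ℤ) → (Fin n → ℤ) → ℝ)
    (hq : ∀ x x' : Fin n → ℤ, q x x'
      = ∑ i : Fin h, ∑ e ∈ R.filter (fun e => f i e.1 = x ∧ f i e.2 = x'), Λ e x) :
    ∀ x : Fin n → ℤ, ν x * ∑' x' : Fin n → ℤ, q x x'
      = ∑' x' : Fin n → ℤ, ν x' * q x' x := by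

  intro x
  classical
  set S : Finset (Fin n → ℤ) :=
    ((Finset.univ ×ˢ R).image fun p : Fin h × ((Fin n → ℤ) × (Fin n → ℤ)) => f p.1 p.2.1) ∪
    ((Finset.univ ×ˢ R).image fun p : Fin h × ((Fin n → ℤ) × (Fin n → ℤ)) => f p.1 p.2.2)
    with hSdef
  have hmem1 : ∀ i : Fin h, ∀ e ∈ R, f i e.1 ∈ S := fun i e he =>
    Finset.mem_union_left _ (Finset.mem_image.2
      ⟨(i, e), Finset.mem_product.2 ⟨Finset.mem_univ _, he⟩, rfl⟩)
  have hmem2 : ∀ i : Fin h, ∀ e ∈ R, f i e.2 ∈ S := fun i e he =>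
    Finset.mem_union_right _ (Finset.mem_image.2
      ⟨(i, e), Finset.mem_product.2 ⟨Finset.mem_univ _, he⟩, rfl⟩)
  have hq0 : ∀ b ∉ S, q x b = 0 := by
    intro b hb
    rw [hq]
    refine Finset.sum_eq_zero fun i _ => ?_
    have : R.filter (fun e => f i e.1 = x ∧ f i e.2 = b) = ∅ :=
      Finset.filter_eq_empty_iff.2 fun e he hh => hb (hh.2 ▸ hmem2 i e he)
    rw [this, Finset.sum_empty]
  have hq0' : ∀ b ∉ S, ν b * q b x = 0 := by
    intro b hb
    have : q b x = 0 := by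
      rw [hq]
      refine Finset.sum_eq_zero fun i _ => ?_
      have : R.filter (fun e => f i e.1 = b ∧ f i e.2 = x) = ∅ :=
        Finset.filter_eq_empty_iff.2 fun e he hh => hb (hh.1 ▸ hmem1 i e he)
      rw [this, Finset.sum_empty]
    rw [this, mul_zero]
  rw [tsum_eq_sum hq0, tsum_eq_sum hq0']
  have key : ∀ i : Fin h,
      ν x * ∑ e ∈ R.filter (fun e => f i e.1 = x), Λ e x
        = ∑ e ∈ R.filter (fun e => f i e.2 = x), ν (f i e.1) * Λ e (f i e.1) := by
    intro i
    by_cases hx : x ∈ C.image (f i)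
    · exact hnb i x hx
    · have h1 : R.filter (fun e => f i e.1 = x) = ∅ :=
        Finset.filter_eq_empty_iff.2 fun e he hex =>
          hx (Finset.mem_image.2 ⟨e.1, (hR e he).1, hex⟩)
      have h2 : R.filter (fun e => f i e.2 = x) = ∅ :=
        Finset.filter_eq_empty_iff.2 fun e he hex =>
          hx (Finset.mem_image.2 ⟨e.2, (hR e he).2.1, hex⟩)
      rw [h1, h2]; simp
  have lhs_eq : ν x * ∑ x' ∈ S, q x x'
      = ∑ i : Fin h, ν x * ∑ e ∈ R.filter (fun e => f i e.1 = x), Λ e x := by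
    simp only [hq]
    rw [Finset.sum_comm, Finset.mul_sum]
    refine Finset.sum_congr rfl fun i _ => ?_
    congr 1
    have : ∀ x' : Fin n → ℤ,
        R.filter (fun e => f i e.1 = x ∧ f i e.2 = x')
          = (R.filter (fun e => f i e.1 = x)).filter (fun e => f i e.2 = x') := by
      intro x'; rw [Finset.filter_filter]
    simp only [this]
    exact Finset.sum_fiberwise_of_maps_to
      (fun e he => hmem2 i e (Finset.mem_of_mem_filter e he)) _
  have rhs_eq : ∑ x' ∈ S, ν x' * q x' x
      = ∑ i : Fin h, ∑ e ∈ R.filter (fun e => f i e.2 = x),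
          ν (f i e.1) * Λ e (f i e.1) := by
    simp only [hq, Finset.mul_sum]
    rw [Finset.sum_comm]
    refine Finset.sum_congr rfl fun i _ => ?_
    have hcongr : ∀ x' ∈ S,
        ∑ e ∈ R.filter (fun e => f i e.1 = x' ∧ f i e.2 = x), ν x' * Λ e x'
          = ∑ e ∈ R.filter (fun e => f i e.1 = x' ∧ f i e.2 = x),
              ν (f i e.1) * Λ e (f i e.1) := by
      intro x' _
      refine Finset.sum_congr rfl fun e he => ?_
      have := (Finset.mem_filter.1 he).2.1
      rw [this]
    rw [Finset.sum_congr rfl hcongr]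
    have : ∀ x' : Fin n → ℤ,
        R.filter (fun e => f i e.1 = x' ∧ f i e.2 = x)
          = (R.filter (fun e => f i e.2 = x)).filter (fun e => f i e.1 = x') := by
      intro x'
      rw [Finset.filter_filter]
      exact Finset.filter_congr fun e _ => by tauto
    simp only [this]
    exact Finset.sum_fiberwise_of_maps_to
      (fun e he => hmem1 i e (Finset.mem_of_mem_filter e he)) _
  rw [lhs_eq, rhs_eq]
  exact Finset.sum_congr rfl fun i _ => key i
end

section
/- For a stochastic reaction system (G, Λ) and a measure ν on ℤ^n_{≥0}, the following are equivalent: (1) every injective copy of G is node balanced with respect to (Λ, ν); (2) ν is a complex balanced measure; (3) every copy of G is node balanced with respect to (Λ, ν). -/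
private lemma fiber_sum {α β M : Type*} [DecidableEq α] [DecidableEq β] [AddCommMonoid M]
    (R : Finset α) (C : Finset β) (π : α → β) (hπ : ∀ e ∈ R, π e ∈ C)
    (p : β → Prop) [DecidablePred p] (g : α → M) :
    ∑ e ∈ R.filter (fun e => p (π e)), g e
      = ∑ y ∈ C.filter p, ∑ e ∈ R.filter (fun e => π e = y), g e := by
  rw [← Finset.sum_biUnion]
  · congr 1
    ext e
    simp only [Finset.mem_biUnion, Finset.mem_filter]
    constructor
    · rintro ⟨he, hp⟩; exact ⟨π e, ⟨hπ e he, hp⟩, he, rfl⟩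
    · rintro ⟨y, ⟨hy, hp⟩, he, rfl⟩; exact ⟨he, hp⟩
  · intro y1 h1 y2 h2 hne
    rw [Function.onFun, Finset.disjoint_left]
    intro e he1 he2
    simp only [Finset.mem_filter] at he1 he2
    exact hne (he1.2 ▸ he2.2 ▸ rfl)

private lemma inj_to_cb
    (n : ℕ) [DecidableEq (Fin n → ℤ)]
    (C : Finset (Fin n → ℤ)) (R : Finset ((Fin n → ℤ) × (Fin n → ℤ)))
    (hCnn : ∀ y ∈ C, (0 : Fin n → ℤ) ≤ y)
    (Λ : (Fin n → ℤ) × (Fin n → ℤ) → (Fin n → ℤ) → ℝ)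
    (hΛ : ∀ e ∈ R, ∀ x : Fin n → ℤ, Λ e x ≠ 0 → e.1 ≤ x)
    (ν : (Fin n → ℤ) → ℝ)
    (hinj : ∀ f : (Fin n → ℤ) → (Fin n → ℤ),
        (∀ z ∈ C, (0 : Fin n → ℤ) ≤ f z) →
        (∀ e ∈ R, f e.2 - f e.1 = e.2 - e.1) →
        Set.InjOn f ↑C →
        (∀ x ∈ C.image f,
          ν x * ∑ e ∈ R.filter (fun e => f e.1 = x), Λ e x
            = ∑ e ∈ R.filter (fun e => f e.2 = x), ν (f e.1) * Λ e (f e.1))) :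
    ∀ y ∈ C, ∀ x : Fin n → ℤ, (0 : Fin n → ℤ) ≤ x →
        ∑ e ∈ R.filter (fun e => e.1 = y), Λ e x * ν x
          = ∑ e ∈ R.filter (fun e => e.2 = y),
              Λ e (x + e.1 - y) * ν (x + e.1 - y) := by
  intro y hy x hx
  by_cases hyx : y ≤ x
  · set f : (Fin n → ℤ) → (Fin n → ℤ) := fun z => z + (x - y) with hf
    have key : ∀ z : Fin n → ℤ, z + (x - y) = x ↔ z = y := by
      intro z
      constructor
      · intro h
        have h2 : z + (x - y) = y + (x - y) := by rw [h]; ring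
        exact add_right_cancel h2
      · rintro rfl; ring
    have h1 : ∀ z ∈ C, (0 : Fin n → ℤ) ≤ f z := by
      intro z hz i
      have a := hCnn z hz i
      have b := hyx i
      simp only [hf, Pi.zero_apply, Pi.add_apply, Pi.sub_apply] at a b ⊢
      omega
    have h2 : ∀ e ∈ R, f e.2 - f e.1 = e.2 - e.1 := by
      intro e _
      show (e.2 + (x - y)) - (e.1 + (x - y)) = e.2 - e.1
      ring
    have h3 : Set.InjOn f ↑C := fun a _ b _ h => add_right_cancel h
    have hxmem : x ∈ C.image f := Finset.mem_image.mpr ⟨y, hy, by show y + (x - y) = x; ring⟩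
    have hb := hinj f h1 h2 h3 x hxmem
    have F1 : R.filter (fun e => f e.1 = x) = R.filter (fun e => e.1 = y) :=
      Finset.filter_congr fun e _ => by
        show (f e.1 = x) ↔ (e.1 = y)
        exact key e.1
    have F2 : R.filter (fun e => f e.2 = x) = R.filter (fun e => e.2 = y) :=
      Finset.filter_congr fun e _ => by
        show (f e.2 = x) ↔ (e.2 = y)
        exact key e.2
    rw [F1, F2] at hb
    calc ∑ e ∈ R.filter (fun e => e.1 = y), Λ e x * ν x
        = ν x * ∑ e ∈ R.filter (fun e => e.1 = y), Λ e x := by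
          rw [Finset.mul_sum]
          exact Finset.sum_congr rfl fun e _ => mul_comm _ _
      _ = ∑ e ∈ R.filter (fun e => e.2 = y), ν (f e.1) * Λ e (f e.1) := hb
      _ = ∑ e ∈ R.filter (fun e => e.2 = y), Λ e (x + e.1 - y) * ν (x + e.1 - y) := by
          refine Finset.sum_congr rfl fun e _ => ?_
          have : f e.1 = x + e.1 - y := by show e.1 + (x - y) = x + e.1 - y; ring
          rw [this, mul_comm]
  · rw [Finset.sum_eq_zero, Finset.sum_eq_zero]
    · intro e he
      rw [Finset.mem_filter] at he
      have hz : Λ e (x + e.1 - y) = 0 := by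
        by_contra h
        apply hyx
        have hle := hΛ e he.1 _ h
        intro i
        have := hle i
        simp only [Pi.add_apply, Pi.sub_apply] at this
        linarith only [this]
      rw [hz, zero_mul]
    · intro e he
      rw [Finset.mem_filter] at he
      have hz : Λ e x = 0 := by
        by_contra h
        exact hyx (he.2 ▸ hΛ e he.1 x h)
      rw [hz, zero_mul]

private lemma cb_to_all
    (n : ℕ) [DecidableEq (Fin n → ℤ)]
    (C : Finset (Fin n → ℤ)) (R : Finset ((Fin n → ℤ) × (Fin n → ℤ)))
    (hR : ∀ e ∈ R, e.1 ∈ C ∧ e.2 ∈ C ∧ e.1 ≠ e.2)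
    (Λ : (Fin n → ℤ) × (Fin n → ℤ) → (Fin n → ℤ) → ℝ)
    (ν : (Fin n → ℤ) → ℝ)
    (hcb : ∀ y ∈ C, ∀ x : Fin n → ℤ, (0 : Fin n → ℤ) ≤ x →
        ∑ e ∈ R.filter (fun e => e.1 = y), Λ e x * ν x
          = ∑ e ∈ R.filter (fun e => e.2 = y),
              Λ e (x + e.1 - y) * ν (x + e.1 - y)) :
    ∀ f : (Fin n → ℤ) → (Fin n → ℤ),
        (∀ z ∈ C, (0 : Fin n → ℤ) ≤ f z) →
        (∀ e ∈ R, f e.2 - f e.1 = e.2 - e.1) →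
        (∀ x ∈ C.image f,
          ν x * ∑ e ∈ R.filter (fun e => f e.1 = x), Λ e x
            = ∑ e ∈ R.filter (fun e => f e.2 = x), ν (f e.1) * Λ e (f e.1)) := by
  intro f h1 h2 x hx
  obtain ⟨y0, hy0, hfy0⟩ := Finset.mem_image.mp hx
  have hx0 : (0 : Fin n → ℤ) ≤ x := hfy0 ▸ h1 y0 hy0
  rw [Finset.mul_sum]
  rw [fiber_sum R C Prod.fst (fun e he => (hR e he).1) (fun y => f y = x)
      (fun e => ν x * Λ e x)]
  rw [fiber_sum R C Prod.snd (fun e he => (hR e he).2.1) (fun y => f y = x)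
      (fun e => ν (f e.1) * Λ e (f e.1))]
  refine Finset.sum_congr rfl fun y hy => ?_
  rw [Finset.mem_filter] at hy
  calc ∑ e ∈ R.filter (fun e => e.1 = y), ν x * Λ e x
      = ∑ e ∈ R.filter (fun e => e.1 = y), Λ e x * ν x :=
        Finset.sum_congr rfl fun e _ => mul_comm _ _
    _ = ∑ e ∈ R.filter (fun e => e.2 = y),
          Λ e (x + e.1 - y) * ν (x + e.1 - y) := hcb y hy.1 x hx0
    _ = ∑ e ∈ R.filter (fun e => e.2 = y), ν (f e.1) * Λ e (f e.1) := by
        refine Finset.sum_congr rfl fun e he => ?_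
        rw [Finset.mem_filter] at he
        have h := h2 e he.1
        rw [he.2, hy.2] at h
        have hfe : f e.1 = x + e.1 - y := by linear_combination -h
        rw [hfe, mul_comm]

/-- For a stochastic reaction system `(G, Λ)` and a measure `ν`
on `ℤ^n_{≥0}` (extended by `0` outside the nonnegative orthant), the following
are equivalent: (1) every injective copy of `G` is node balanced w.r.t.
`(Λ, ν)`; (2) `ν` is a complex balanced measure; (3) every copy of `G` is node
balanced w.r.t. `(Λ, ν)`. -/
theorem injective_copies_iff_complex_balanced_iff_all_copies
    (n : ℕ) [DecidableEq (Fin n → ℤ)]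
    (C : Finset (Fin n → ℤ)) (R : Finset ((Fin n → ℤ) × (Fin n → ℤ)))
    (hCnn : ∀ y ∈ C, (0 : Fin n → ℤ) ≤ y)
    (hR : ∀ e ∈ R, e.1 ∈ C ∧ e.2 ∈ C ∧ e.1 ≠ e.2)
    (Λ : (Fin n → ℤ) × (Fin n → ℤ) → (Fin n → ℤ) → ℝ)
    (hΛnn : ∀ e ∈ R, ∀ x : Fin n → ℤ, 0 ≤ Λ e x)
    (hΛ : ∀ e ∈ R, ∀ x : Fin n → ℤ, Λ e x ≠ 0 → e.1 ≤ x)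
    (ν : (Fin n → ℤ) → ℝ) (hνnn : ∀ x, 0 ≤ ν x)
    (hν0 : ∀ x : Fin n → ℤ, ¬ (0 : Fin n → ℤ) ≤ x → ν x = 0) :
    ((∀ f : (Fin n → ℤ) → (Fin n → ℤ),
        (∀ z ∈ C, (0 : Fin n → ℤ) ≤ f z) →
        (∀ e ∈ R, f e.2 - f e.1 = e.2 - e.1) →
        Set.InjOn f ↑C →
        (∀ x ∈ C.image f,
          ν x * ∑ e ∈ R.filter (fun e => f e.1 = x), Λ e x
            = ∑ e ∈ R.filter (fun e => f e.2 = x), ν (f e.1) * Λ e (f e.1)))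
      ↔
      (∀ y ∈ C, ∀ x : Fin n → ℤ, (0 : Fin n → ℤ) ≤ x →
        ∑ e ∈ R.filter (fun e => e.1 = y), Λ e x * ν x
          = ∑ e ∈ R.filter (fun e => e.2 = y),
              Λ e (x + e.1 - y) * ν (x + e.1 - y)))
    ∧
    ((∀ y ∈ C, ∀ x : Fin n → ℤ, (0 : Fin n → ℤ) ≤ x →
        ∑ e ∈ R.filter (fun e => e.1 = y), Λ e x * ν x
          = ∑ e ∈ R.filter (fun e => e.2 = y),
              Λ e (x + e.1 - y) * ν (x + e.1 - y))
      ↔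
      (∀ f : (Fin n → ℤ) → (Fin n → ℤ),
        (∀ z ∈ C, (0 : Fin n → ℤ) ≤ f z) →
        (∀ e ∈ R, f e.2 - f e.1 = e.2 - e.1) →
        (∀ x ∈ C.image f,
          ν x * ∑ e ∈ R.filter (fun e => f e.1 = x), Λ e x
            = ∑ e ∈ R.filter (fun e => f e.2 = x), ν (f e.1) * Λ e (f e.1)))) := by
  refine ⟨⟨fun hinj => inj_to_cb n C R hCnn Λ hΛ ν hinj,
           fun hcb f h1 h2 _ => cb_to_all n C R hR Λ ν hcb f h1 h2⟩,
          ⟨fun hcb => cb_to_all n C R hR Λ ν hcb,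
           fun hall => inj_to_cb n C R hCnn Λ hΛ ν (fun f h1 h2 _ => hall f h1 h2)⟩⟩
end

section
/- Every complex balanced measure ν of a stochastic reaction system is a stationary measure, i.e., for all x ∈ ℤ^n_{≥0}: ν(x) Σ_{y→y'∈R} λ_{y→y'}(x) = Σ_{y→y'∈R} ν(x+y-y') λ_{y→y'}(x+y-y'). -/
/-- Every complex balanced measure `ν` of a stochastic reaction
system is stationary: for all `x ∈ ℤ^n_{≥0}`,
`ν(x) Σ_{y→y'∈R} λ_{y→y'}(x) = Σ_{y→y'∈R} ν(x+y-y') λ_{y→y'}(x+y-y')`. -/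
theorem complex_balanced_implies_stationary
    (n : ℕ) [DecidableEq (Fin n → ℤ)]
    (C : Finset (Fin n → ℤ)) (R : Finset ((Fin n → ℤ) × (Fin n → ℤ)))
    (hCnn : ∀ y ∈ C, (0 : Fin n → ℤ) ≤ y)
    (hR : ∀ e ∈ R, e.1 ∈ C ∧ e.2 ∈ C ∧ e.1 ≠ e.2)
    (Λ : (Fin n → ℤ) × (Fin n → ℤ) → (Fin n → ℤ) → ℝ)
    (hΛnn : ∀ e ∈ R, ∀ x : Fin n → ℤ, 0 ≤ Λ e x)
    (hΛ : ∀ e ∈ R, ∀ x : Fin n → ℤ, Λ e x ≠ 0 → e.1 ≤ x)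
    (ν : (Fin n → ℤ) → ℝ) (hνnn : ∀ x, 0 ≤ ν x)
    (hν0 : ∀ x : Fin n → ℤ, ¬ (0 : Fin n → ℤ) ≤ x → ν x = 0)
    (hcb : ∀ y ∈ C, ∀ x : Fin n → ℤ, (0 : Fin n → ℤ) ≤ x →
      ∑ e ∈ R.filter (fun e => e.1 = y), Λ e x * ν x
        = ∑ e ∈ R.filter (fun e => e.2 = y),
            Λ e (x + e.1 - y) * ν (x + e.1 - y)) :
    ∀ x : Fin n → ℤ, (0 : Fin n → ℤ) ≤ x →
      ν x * ∑ e ∈ R, Λ e x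
        = ∑ e ∈ R, ν (x + e.1 - e.2) * Λ e (x + e.1 - e.2) := by
  intro x hx
  have h1 : ν x * ∑ e ∈ R, Λ e x = ∑ e ∈ R, Λ e x * ν x := by
    rw [Finset.mul_sum]; exact Finset.sum_congr rfl (fun e _ => mul_comm _ _)
  rw [h1]
  have hmap1 : ∀ e ∈ R, e.1 ∈ C := fun e he => (hR e he).1
  have hmap2 : ∀ e ∈ R, e.2 ∈ C := fun e he => (hR e he).2.1
  calc ∑ e ∈ R, Λ e x * ν x
      = ∑ y ∈ C, ∑ e ∈ R.filter (fun e => e.1 = y), Λ e x * ν x :=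
        (Finset.sum_fiberwise_of_maps_to hmap1 _).symm
    _ = ∑ y ∈ C, ∑ e ∈ R.filter (fun e => e.2 = y),
          Λ e (x + e.1 - y) * ν (x + e.1 - y) :=
        Finset.sum_congr rfl (fun y hy => hcb y hy x hx)
    _ = ∑ y ∈ C, ∑ e ∈ R.filter (fun e => e.2 = y),
          Λ e (x + e.1 - e.2) * ν (x + e.1 - e.2) := by
        refine Finset.sum_congr rfl (fun y _ => Finset.sum_congr rfl (fun e he => ?_))
        rw [(Finset.mem_filter.1 he).2]
    _ = ∑ e ∈ R, Λ e (x + e.1 - e.2) * ν (x + e.1 - e.2) :=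
        Finset.sum_fiberwise_of_maps_to hmap2 _
    _ = ∑ e ∈ R, ν (x + e.1 - e.2) * Λ e (x + e.1 - e.2) :=
        Finset.sum_congr rfl (fun e _ => mul_comm _ _)
end

section
/- Let (G, K^S_{κ,θ}) be a stochastic product form system and let ν(x) = c^x ∏_{i=1}^n ∏_{j=1}^{x_i} 1/θ_i(j) for some c ∈ ℝ^n_{>0}. Then there exists an active, injective copy of G that is node balanced with respect to (K^S_{κ,θ}, ν) if and only if ν is a complex balanced measure. -/
lemma aux1 (θ : ℤ → ℝ) (z : ℕ) : ∀ a : ℕ, a ≤ z →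
    (∏ j ∈ Finset.range a, θ ((z:ℤ) - j)) * ∏ j ∈ Finset.range (z - a), θ ((j:ℤ)+1)
      = ∏ j ∈ Finset.range z, θ ((j:ℤ)+1) := by
  intro a
  induction a with
  | zero => simp
  | succ a ih =>
    intro h
    have h' : a ≤ z := by omega
    have hz : z - a = (z - (a+1)) + 1 := by omega
    have hcast : ((z - (a+1) : ℕ) : ℤ) + 1 = (z:ℤ) - a := by push_cast; omega
    have key : ∏ j ∈ Finset.range (z - a), θ ((j:ℤ)+1)
        = (∏ j ∈ Finset.range (z-(a+1)), θ ((j:ℤ)+1)) * θ ((z:ℤ) - a) := by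
      rw [hz, Finset.prod_range_succ, hcast]
    have h1 := ih h'
    rw [key] at h1
    rw [Finset.prod_range_succ]
    nlinarith [h1]

lemma aux2 (θ : ℤ → ℝ) (hθ : ∀ m : ℤ, 1 ≤ m → θ m ≠ 0) (z a : ℕ) (h : a ≤ z) :
    (∏ j ∈ Finset.range a, θ ((z:ℤ) - j)) * ∏ j ∈ Finset.range z, (θ ((j:ℤ)+1))⁻¹
      = ∏ j ∈ Finset.range (z - a), (θ ((j:ℤ)+1))⁻¹ := by
  have h1 := aux1 θ z a h
  have hne : ∀ k : ℕ, (∏ j ∈ Finset.range k, θ ((j:ℤ)+1)) ≠ 0 := by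
    intro k
    exact Finset.prod_ne_zero_iff.2 fun j _ => hθ _ (by omega)
  have hb := hne (z - a)
  rw [Finset.prod_inv_distrib, Finset.prod_inv_distrib, ← h1]
  rw [mul_inv, ← mul_assoc]
  have ha : (∏ j ∈ Finset.range a, θ ((z:ℤ) - j)) ≠ 0 := by
    intro h0
    exact hne z (by rw [← h1, h0, zero_mul])
  field_simp

lemma aux3 (θ : ℤ → ℝ) (hθ : ∀ m : ℤ, θ m = 0 ↔ m ≤ 0) (ci : ℝ) (zi ai : ℕ) (h : ai ≤ zi) :
    (∏ j ∈ Finset.range ai, θ ((zi:ℤ) - j)) * (ci ^ zi * ∏ j ∈ Finset.range zi, (θ ((j:ℤ)+1))⁻¹)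
      = ci ^ ai * (ci ^ (zi - ai) * ∏ j ∈ Finset.range (zi - ai), (θ ((j:ℤ)+1))⁻¹) := by
  have h2 := aux2 θ (fun m hm => by rw [Ne, hθ]; omega) zi ai h
  have hp : ci ^ ai * ci ^ (zi - ai) = ci ^ zi := by rw [← pow_add]; congr 1; omega
  calc (∏ j ∈ Finset.range ai, θ ((zi:ℤ) - j)) * (ci ^ zi * ∏ j ∈ Finset.range zi, (θ ((j:ℤ)+1))⁻¹)
      = ci ^ zi * ((∏ j ∈ Finset.range ai, θ ((zi:ℤ) - j)) * ∏ j ∈ Finset.range zi, (θ ((j:ℤ)+1))⁻¹) := by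
        ring
    _ = ci ^ zi * ∏ j ∈ Finset.range (zi - ai), (θ ((j:ℤ)+1))⁻¹ := by rw [h2]
    _ = _ := by rw [← hp]; ring

lemma keyL (n : ℕ) (θ : Fin n → ℤ → ℝ) (hθ0 : ∀ i m, θ i m = 0 ↔ m ≤ 0)
    (c : Fin n → ℝ) (ν : (Fin n → ℤ) → ℝ)
    (hν : ∀ x : Fin n → ℤ, (0 : Fin n → ℤ) ≤ x →
      ν x = (∏ i, c i ^ (x i).toNat)
        * ∏ i, ∏ j ∈ Finset.range (x i).toNat, (θ i ((j : ℤ) + 1))⁻¹)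
    (hν0 : ∀ x : Fin n → ℤ, ¬ (0 : Fin n → ℤ) ≤ x → ν x = 0)
    (a z : Fin n → ℤ) (ha : (0 : Fin n → ℤ) ≤ a) :
    (∏ i, ∏ j ∈ Finset.range (a i).toNat, θ i (z i - j)) * ν z
      = (∏ i, c i ^ (a i).toNat) * ν (z - a) := by
  have ha' : ∀ i, 0 ≤ a i := fun i => ha i
  by_cases hz : (0 : Fin n → ℤ) ≤ z
  · have hz' : ∀ i, 0 ≤ z i := fun i => hz i
    by_cases haz : a ≤ z
    · have haz' : ∀ i, a i ≤ z i := fun i => haz i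
      have hsub : (0 : Fin n → ℤ) ≤ z - a := by
        intro i
        simp only [Pi.sub_apply, Pi.zero_apply]
        have := haz' i; have := ha' i; omega
      rw [hν z hz, hν (z - a) hsub]
      simp only [← Finset.prod_mul_distrib]
      refine Finset.prod_congr rfl fun i _ => ?_
      obtain ⟨zi, hzi⟩ : ∃ m : ℕ, z i = (m : ℤ) := ⟨(z i).toNat, (Int.toNat_of_nonneg (hz' i)).symm⟩
      obtain ⟨ai, hai⟩ : ∃ m : ℕ, a i = (m : ℤ) := ⟨(a i).toNat, (Int.toNat_of_nonneg (ha' i)).symm⟩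
      have hle : ai ≤ zi := by have := haz' i; omega
      simp only [Pi.sub_apply]
      rw [hzi, hai]
      rw [show ((zi : ℤ) - (ai : ℤ)) = ((zi - ai : ℕ) : ℤ) by push_cast; omega]
      simp only [Int.toNat_natCast]
      exact aux3 (θ i) (hθ0 i) (c i) zi ai hle
    · have : ∃ i, z i < a i := by
        by_contra hcon
        push_neg at hcon
        exact haz fun i => hcon i
      obtain ⟨i, hi⟩ := this
      have hL : (∏ i, ∏ j ∈ Finset.range (a i).toNat, θ i (z i - j)) = 0 := by
        refine Finset.prod_eq_zero (Finset.mem_univ i) ?_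
        refine Finset.prod_eq_zero (i := (z i).toNat) (Finset.mem_range.mpr ?_) ((hθ0 i _).2 ?_)
        · have := hz' i; omega
        · have := hz' i; omega
      have hR : ν (z - a) = 0 := by
        refine hν0 _ fun hle => ?_
        have := hle i
        simp only [Pi.sub_apply, Pi.zero_apply] at this
        omega
      rw [hL, hR, zero_mul, mul_zero]
  · have hR : ν (z - a) = 0 := by
      refine hν0 _ fun hle => ?_
      apply hz
      intro i
      have h1 := hle i
      have h2 := ha' i
      simp only [Pi.sub_apply, Pi.zero_apply] at h1 ⊢
      omega
    rw [hν0 z hz, hR, mul_zero, mul_zero]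

lemma nuPos (n : ℕ) (θ : Fin n → ℤ → ℝ) (hθnn : ∀ i m, 0 ≤ θ i m)
    (hθ0 : ∀ i m, θ i m = 0 ↔ m ≤ 0)
    (c : Fin n → ℝ) (hc : ∀ i, 0 < c i) (ν : (Fin n → ℤ) → ℝ)
    (hν : ∀ x : Fin n → ℤ, (0 : Fin n → ℤ) ≤ x →
      ν x = (∏ i, c i ^ (x i).toNat)
        * ∏ i, ∏ j ∈ Finset.range (x i).toNat, (θ i ((j : ℤ) + 1))⁻¹)
    (x : Fin n → ℤ) (hx : (0 : Fin n → ℤ) ≤ x) : 0 < ν x := by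
  rw [hν x hx]
  refine mul_pos (Finset.prod_pos fun i _ => pow_pos (hc i) _)
    (Finset.prod_pos fun i _ => Finset.prod_pos fun j _ => inv_pos.2 ?_)
  refine lt_of_le_of_ne (hθnn i _) (Ne.symm fun h => ?_)
  have := (hθ0 i _).1 h
  omega

/-- For a stochastic product form system `(G, K^S_{κ,θ})` and the
measure `ν(x) = c^x ∏_i ∏_{j=1}^{x_i} 1/θ_i(j)` (with `c > 0`), there exists an
active, injective, node balanced copy of `G` with respect to `(K^S_{κ,θ}, ν)`
if and only if `ν` is a complex balanced measure. -/
theorem product_form_one_copy_iff_complex_balanced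
    (n : ℕ) [DecidableEq (Fin n → ℤ)]
    (C : Finset (Fin n → ℤ)) (R : Finset ((Fin n → ℤ) × (Fin n → ℤ)))
    (hCnn : ∀ y ∈ C, (0 : Fin n → ℤ) ≤ y)
    (hR : ∀ e ∈ R, e.1 ∈ C ∧ e.2 ∈ C ∧ e.1 ≠ e.2)
    (hcover : ∀ y ∈ C, ∃ e ∈ R, e.1 = y ∨ e.2 = y)
    (κ : (Fin n → ℤ) × (Fin n → ℤ) → ℝ) (hκ : ∀ e ∈ R, 0 < κ e)
    (θ : Fin n → ℤ → ℝ) (hθnn : ∀ i m, 0 ≤ θ i m)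
    (hθ0 : ∀ i m, θ i m = 0 ↔ m ≤ 0)
    (Λ : (Fin n → ℤ) × (Fin n → ℤ) → (Fin n → ℤ) → ℝ)
    (hΛ : ∀ e : (Fin n → ℤ) × (Fin n → ℤ), ∀ x : Fin n → ℤ,
      Λ e x = κ e * ∏ i, ∏ j ∈ Finset.range (e.1 i).toNat, θ i (x i - j))
    (c : Fin n → ℝ) (hc : ∀ i, 0 < c i)
    (ν : (Fin n → ℤ) → ℝ)
    (hν : ∀ x : Fin n → ℤ, (0 : Fin n → ℤ) ≤ x →
      ν x = (∏ i, c i ^ (x i).toNat)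
        * ∏ i, ∏ j ∈ Finset.range (x i).toNat, (θ i ((j : ℤ) + 1))⁻¹)
    (hν0 : ∀ x : Fin n → ℤ, ¬ (0 : Fin n → ℤ) ≤ x → ν x = 0) :
    (∃ f : (Fin n → ℤ) → (Fin n → ℤ),
      (∀ z ∈ C, (0 : Fin n → ℤ) ≤ f z) ∧
      (∀ e ∈ R, f e.2 - f e.1 = e.2 - e.1) ∧
      Set.InjOn f ↑C ∧
      (∀ e ∈ R, 0 < Λ e (f e.1)) ∧
      (∀ x ∈ C.image f,
        ν x * ∑ e ∈ R.filter (fun e => f e.1 = x), Λ e x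
          = ∑ e ∈ R.filter (fun e => f e.2 = x), ν (f e.1) * Λ e (f e.1)))
    ↔
    (∀ y ∈ C, ∀ x : Fin n → ℤ, (0 : Fin n → ℤ) ≤ x →
      ∑ e ∈ R.filter (fun e => e.1 = y), Λ e x * ν x
        = ∑ e ∈ R.filter (fun e => e.2 = y),
            Λ e (x + e.1 - y) * ν (x + e.1 - y)) := by
  constructor
  · rintro ⟨f, hf0, hfcopy, hfinj, hfact, hfnb⟩ y hy x hx
    -- node balance at f y, with filters rewritten
    have hnb := hfnb (f y) (Finset.mem_image_of_mem f hy)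
    have hflt1 : R.filter (fun e => f e.1 = f y) = R.filter (fun e => e.1 = y) := by
      refine Finset.filter_congr fun e he => ?_
      constructor
      · intro h
        exact hfinj (Finset.mem_coe.mpr (hR e he).1) (Finset.mem_coe.mpr hy) h
      · intro h; rw [h]
    have hflt2 : R.filter (fun e => f e.2 = f y) = R.filter (fun e => e.2 = y) := by
      refine Finset.filter_congr fun e he => ?_
      constructor
      · intro h
        exact hfinj (Finset.mem_coe.mpr (hR e he).2.1) (Finset.mem_coe.mpr hy) h
      · intro h; rw [h]
    rw [hflt1, hflt2] at hnb
    -- term rewriting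
    have hterm1 : ∀ e ∈ R.filter (fun e => e.1 = y),
        ν (f y) * Λ e (f y) = κ e * ((∏ i, c i ^ (y i).toNat) * ν (f y - y)) := by
      intro e he
      obtain ⟨heR, he1⟩ := Finset.mem_filter.mp he
      rw [hΛ e (f y), he1, ← keyL n θ hθ0 c ν hν hν0 y (f y) (hCnn y hy)]
      ring
    have hterm2 : ∀ e ∈ R.filter (fun e => e.2 = y),
        ν (f e.1) * Λ e (f e.1) = (κ e * ∏ i, c i ^ (e.1 i).toNat) * ν (f y - y) := by
      intro e he
      obtain ⟨heR, he2⟩ := Finset.mem_filter.mp he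
      have hshift : f e.1 - e.1 = f y - y := by
        have hcp := hfcopy e heR
        rw [he2] at hcp
        linear_combination -hcp
      have hk := keyL n θ hθ0 c ν hν hν0 e.1 (f e.1) (hCnn e.1 (hR e heR).1)
      rw [hshift] at hk
      rw [hΛ e (f e.1)]
      linear_combination (κ e) * hk
    have hnb' : ((∏ i, c i ^ (y i).toNat) * ∑ e ∈ R.filter (fun e => e.1 = y), κ e)
          * ν (f y - y)
        = (∑ e ∈ R.filter (fun e => e.2 = y), κ e * ∏ i, c i ^ (e.1 i).toNat)
          * ν (f y - y) := by
      calc ((∏ i, c i ^ (y i).toNat) * ∑ e ∈ R.filter (fun e => e.1 = y), κ e)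
            * ν (f y - y)
          = ∑ e ∈ R.filter (fun e => e.1 = y), ν (f y) * Λ e (f y) := by
            rw [Finset.mul_sum, Finset.sum_mul]
            refine Finset.sum_congr rfl fun e he => ?_
            rw [hterm1 e he]; ring
        _ = ∑ e ∈ R.filter (fun e => e.2 = y), ν (f e.1) * Λ e (f e.1) := by
            rw [← hnb, Finset.mul_sum]
        _ = _ := by
            rw [Finset.sum_mul]
            exact Finset.sum_congr rfl fun e he => hterm2 e he
    -- the balance of rate constants
    have star : (∏ i, c i ^ (y i).toNat) * ∑ e ∈ R.filter (fun e => e.1 = y), κ e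
        = ∑ e ∈ R.filter (fun e => e.2 = y), κ e * ∏ i, c i ^ (e.1 i).toNat := by
      by_cases hne : (R.filter (fun e => e.1 = y)).Nonempty
      · obtain ⟨e0, he0⟩ := hne
        have he0R := (Finset.mem_filter.mp he0).1
        have he01 := (Finset.mem_filter.mp he0).2
        have hpos : 0 < ν (f y) * Λ e0 (f y) := by
          refine mul_pos (nuPos n θ hθnn hθ0 c hc ν hν (f y) (hf0 y hy)) ?_
          have := hfact e0 he0R
          rwa [he01] at this
        have hDne : ν (f y - y) ≠ 0 := by
          intro h0
          have h1 := hterm1 e0 he0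
          rw [h0, mul_zero, mul_zero] at h1
          exact absurd h1 (ne_of_gt hpos)
        exact mul_right_cancel₀ hDne hnb'
      · rw [Finset.not_nonempty_iff_eq_empty] at hne
        have hSin : R.filter (fun e => e.2 = y) = ∅ := by
          by_contra h
          have h : (R.filter (fun e => e.2 = y)).Nonempty :=
            Finset.nonempty_iff_ne_empty.mpr h
          have hsumpos : 0 < ∑ e ∈ R.filter (fun e => e.2 = y), ν (f e.1) * Λ e (f e.1) := by
            refine Finset.sum_pos (fun e he => ?_) h
            have heR := (Finset.mem_filter.mp he).1
            exact mul_pos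
              (nuPos n θ hθnn hθ0 c hc ν hν (f e.1) (hf0 e.1 (hR e heR).1))
              (hfact e heR)
          rw [hne] at hnb
          simp at hnb
          rw [← hnb] at hsumpos
          exact lt_irrefl 0 hsumpos
        rw [hne, hSin]
        simp
    -- conclude complex balance at (y, x)
    calc ∑ e ∈ R.filter (fun e => e.1 = y), Λ e x * ν x
        = ∑ e ∈ R.filter (fun e => e.1 = y),
            κ e * ((∏ i, c i ^ (y i).toNat) * ν (x - y)) := by
          refine Finset.sum_congr rfl fun e he => ?_
          obtain ⟨heR, he1⟩ := Finset.mem_filter.mp he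
          rw [hΛ e x, he1, mul_assoc, keyL n θ hθ0 c ν hν hν0 y x (hCnn y hy)]
      _ = ((∏ i, c i ^ (y i).toNat) * ∑ e ∈ R.filter (fun e => e.1 = y), κ e)
            * ν (x - y) := by
          rw [Finset.mul_sum, Finset.sum_mul]
          refine Finset.sum_congr rfl fun e he => ?_
          ring
      _ = (∑ e ∈ R.filter (fun e => e.2 = y), κ e * ∏ i, c i ^ (e.1 i).toNat)
            * ν (x - y) := by rw [star]
      _ = ∑ e ∈ R.filter (fun e => e.2 = y),
            Λ e (x + e.1 - y) * ν (x + e.1 - y) := by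
          rw [Finset.sum_mul]
          refine Finset.sum_congr rfl fun e he => ?_
          obtain ⟨heR, he2⟩ := Finset.mem_filter.mp he
          have hid : x + e.1 - y - e.1 = x - y := by ring
          have hk := keyL n θ hθ0 c ν hν hν0 e.1 (x + e.1 - y) (hCnn e.1 (hR e heR).1)
          rw [hid] at hk
          rw [hΛ e (x + e.1 - y)]
          linear_combination (-(κ e)) * hk
  · intro hcb
    refine ⟨fun z => z + 1, ?_, ?_, ?_, ?_, ?_⟩
    · exact fun z hz => le_trans (hCnn z hz) (le_add_of_nonneg_right zero_le_one)
    · intro e he; ring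
    · intro u _ v _ h
      exact add_left_injective 1 h
    · intro e he
      rw [hΛ]
      refine mul_pos (hκ e he) (Finset.prod_pos fun i _ => Finset.prod_pos fun j hj => ?_)
      have hj' := Finset.mem_range.mp hj
      show 0 < θ i (e.1 i + 1 - (j : ℤ))
      refine lt_of_le_of_ne (hθnn i _) (Ne.symm fun h => ?_)
      have := (hθ0 i _).1 h
      omega
    · intro x hx
      obtain ⟨y, hy, rfl⟩ := Finset.mem_image.mp hx
      have hflt1 : R.filter (fun e => e.1 + 1 = y + 1) = R.filter (fun e => e.1 = y) := by
        refine Finset.filter_congr fun e he => ?_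
        constructor
        · intro h; exact add_left_injective 1 h
        · intro h; rw [h]
      have hflt2 : R.filter (fun e => e.2 + 1 = y + 1) = R.filter (fun e => e.2 = y) := by
        refine Finset.filter_congr fun e he => ?_
        constructor
        · intro h; exact add_left_injective 1 h
        · intro h; rw [h]
      have hy1 : (0 : Fin n → ℤ) ≤ y + 1 :=
        le_trans (hCnn y hy) (le_add_of_nonneg_right zero_le_one)
      have hcb' := hcb y hy (y + 1) hy1
      show ν (y + 1) * ∑ e ∈ R.filter (fun e => e.1 + 1 = y + 1), Λ e (y + 1)
          = ∑ e ∈ R.filter (fun e => e.2 + 1 = y + 1), ν (e.1 + 1) * Λ e (e.1 + 1)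
      rw [hflt1, hflt2]
      calc ν (y + 1) * ∑ e ∈ R.filter (fun e => e.1 = y), Λ e (y + 1)
          = ∑ e ∈ R.filter (fun e => e.1 = y), Λ e (y + 1) * ν (y + 1) := by
            rw [Finset.mul_sum]
            exact Finset.sum_congr rfl fun e _ => mul_comm _ _
        _ = ∑ e ∈ R.filter (fun e => e.2 = y),
              Λ e (y + 1 + e.1 - y) * ν (y + 1 + e.1 - y) := hcb'
        _ = ∑ e ∈ R.filter (fun e => e.2 = y), ν (e.1 + 1) * Λ e (e.1 + 1) := by
            refine Finset.sum_congr rfl fun e _ => ?_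
            rw [show y + 1 + e.1 - y = e.1 + 1 by ring, mul_comm]
end

section
/- Let G be a reaction network with complexes C and let c ∈ ℝ^n_{>0} be a complex balanced state for the deterministic mass-action system (G, K^D_κ), i.e., for all y ∈ C: Σ_{y': y→y'} κ_{y→y'} c^y = Σ_{y': y'→y} κ_{y'→y} c^{y'}. Then the measure ν(x) = c^x ∏_{i=1}^n ∏_{j=1}^{x_i} 1/θ_i(j) is a complex balanced measure for the stochastic product form system (G, K^S_{κ,θ}) with the same rate constants. -/
lemma key1 (θ : ℤ → ℝ) (hθ0 : ∀ m, θ m = 0 ↔ m ≤ 0) (c : ℝ)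
    (w z : ℤ) (hw : 0 ≤ w) :
    (∏ j ∈ Finset.range w.toNat, θ (z - j)) *
      (if 0 ≤ z then c ^ z.toNat * ∏ j ∈ Finset.range z.toNat, (θ ((j:ℤ) + 1))⁻¹ else 0)
    = c ^ w.toNat *
      (if 0 ≤ z - w then c ^ (z - w).toNat * ∏ j ∈ Finset.range (z - w).toNat, (θ ((j:ℤ) + 1))⁻¹ else 0) := by
  by_cases hz : 0 ≤ z
  · by_cases hzw : 0 ≤ z - w
    · rw [if_pos hz, if_pos hzw]
      have hzn : z.toNat = (z - w).toNat + w.toNat := by omega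
      have A : ∏ j ∈ Finset.range w.toNat, θ (z - j)
          = ∏ j ∈ Finset.range w.toNat, θ ((((z - w).toNat + j : ℕ) : ℤ) + 1) := by
        rw [← Finset.prod_range_reflect]
        apply Finset.prod_congr rfl
        intro j hj
        simp only [Finset.mem_range] at hj
        congr 1
        omega
      have B : ∏ j ∈ Finset.range z.toNat, (θ ((j:ℤ) + 1))⁻¹
          = (∏ j ∈ Finset.range (z - w).toNat, (θ ((j:ℤ) + 1))⁻¹)
            * ∏ j ∈ Finset.range w.toNat, (θ ((((z - w).toNat + j : ℕ) : ℤ) + 1))⁻¹ := by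
        rw [hzn, Finset.prod_range_add]
      have hne : ∀ j ∈ Finset.range w.toNat, θ ((((z - w).toNat + j : ℕ) : ℤ) + 1) ≠ 0 := by
        intro j hj h
        have := (hθ0 _).1 h
        omega
      have C : (∏ j ∈ Finset.range w.toNat, θ ((((z - w).toNat + j : ℕ) : ℤ) + 1))
          * ∏ j ∈ Finset.range w.toNat, (θ ((((z - w).toNat + j : ℕ) : ℤ) + 1))⁻¹ = 1 := by
        rw [← Finset.prod_mul_distrib]
        exact Finset.prod_eq_one (fun j hj => mul_inv_cancel₀ (hne j hj))
      rw [A, B, hzn, pow_add]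
      calc (∏ j ∈ Finset.range w.toNat, θ ((((z - w).toNat + j : ℕ) : ℤ) + 1)) *
            (c ^ (z - w).toNat * c ^ w.toNat *
              ((∏ j ∈ Finset.range (z - w).toNat, (θ ((j:ℤ) + 1))⁻¹) *
                ∏ j ∈ Finset.range w.toNat, (θ ((((z - w).toNat + j : ℕ) : ℤ) + 1))⁻¹))
          = ((∏ j ∈ Finset.range w.toNat, θ ((((z - w).toNat + j : ℕ) : ℤ) + 1)) *
              ∏ j ∈ Finset.range w.toNat, (θ ((((z - w).toNat + j : ℕ) : ℤ) + 1))⁻¹) *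
            (c ^ w.toNat * (c ^ (z - w).toNat *
              ∏ j ∈ Finset.range (z - w).toNat, (θ ((j:ℤ) + 1))⁻¹)) := by ring
        _ = _ := by rw [C, one_mul]
    · have hmem : z.toNat ∈ Finset.range w.toNat := by
        simp only [Finset.mem_range]; omega
      have hzero : θ (z - z.toNat) = 0 := (hθ0 _).2 (by omega)
      rw [if_neg hzw, Finset.prod_eq_zero hmem hzero]
      ring
  · have h2 : ¬ 0 ≤ z - w := by omega
    rw [if_neg hz, if_neg h2]
    ring


/-- If `c ∈ ℝ^n_{>0}` is a complex balanced state of the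
deterministic mass-action system `(G, K^D_κ)`, i.e. for all `y ∈ C`:
`Σ_{y': y→y'} κ_{y→y'} c^y = Σ_{y': y'→y} κ_{y'→y} c^{y'}`, then the measure
`ν(x) = c^x ∏_i ∏_{j=1}^{x_i} 1/θ_i(j)` is a complex balanced measure for the
stochastic product form system `(G, K^S_{κ,θ})` with the same rate constants. -/
theorem deterministic_cb_gives_stochastic_cb_measure
    (n : ℕ) [DecidableEq (Fin n → ℤ)]
    (C : Finset (Fin n → ℤ)) (R : Finset ((Fin n → ℤ) × (Fin n → ℤ)))
    (hCnn : ∀ y ∈ C, (0 : Fin n → ℤ) ≤ y)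
    (hR : ∀ e ∈ R, e.1 ∈ C ∧ e.2 ∈ C ∧ e.1 ≠ e.2)
    (κ : (Fin n → ℤ) × (Fin n → ℤ) → ℝ) (hκ : ∀ e ∈ R, 0 < κ e)
    (θ : Fin n → ℤ → ℝ) (hθnn : ∀ i m, 0 ≤ θ i m)
    (hθ0 : ∀ i m, θ i m = 0 ↔ m ≤ 0)
    (Λ : (Fin n → ℤ) × (Fin n → ℤ) → (Fin n → ℤ) → ℝ)
    (hΛ : ∀ e : (Fin n → ℤ) × (Fin n → ℤ), ∀ x : Fin n → ℤ,
      Λ e x = κ e * ∏ i, ∏ j ∈ Finset.range (e.1 i).toNat, θ i (x i - j))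
    (c : Fin n → ℝ) (hc : ∀ i, 0 < c i)
    (ν : (Fin n → ℤ) → ℝ)
    (hν : ∀ x : Fin n → ℤ, (0 : Fin n → ℤ) ≤ x →
      ν x = (∏ i, c i ^ (x i).toNat)
        * ∏ i, ∏ j ∈ Finset.range (x i).toNat, (θ i ((j : ℤ) + 1))⁻¹)
    (hν0 : ∀ x : Fin n → ℤ, ¬ (0 : Fin n → ℤ) ≤ x → ν x = 0)
    (hcb : ∀ y ∈ C,
      ∑ e ∈ R.filter (fun e => e.1 = y), κ e * ∏ i, c i ^ (y i).toNat
        = ∑ e ∈ R.filter (fun e => e.2 = y), κ e * ∏ i, c i ^ (e.1 i).toNat) :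
    ∀ y ∈ C, ∀ x : Fin n → ℤ, (0 : Fin n → ℤ) ≤ x →
      ∑ e ∈ R.filter (fun e => e.1 = y), Λ e x * ν x
        = ∑ e ∈ R.filter (fun e => e.2 = y),
            Λ e (x + e.1 - y) * ν (x + e.1 - y) := by
  intro y hy x hx
  set g : Fin n → ℤ → ℝ := fun i m =>
    if 0 ≤ m then c i ^ m.toNat * ∏ j ∈ Finset.range m.toNat, (θ i ((j:ℤ) + 1))⁻¹ else 0
    with hg
  have hνg : ∀ z : Fin n → ℤ, ν z = ∏ i, g i (z i) := by
    intro z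
    by_cases hz : (0 : Fin n → ℤ) ≤ z
    · rw [hν z hz, ← Finset.prod_mul_distrib]
      apply Finset.prod_congr rfl
      intro i _
      rw [hg]
      simp only
      rw [if_pos (show (0:ℤ) ≤ z i from hz i)]
    · rw [hν0 z hz]
      rw [Pi.le_def] at hz
      push_neg at hz
      obtain ⟨i, hi⟩ := hz
      refine (Finset.prod_eq_zero (Finset.mem_univ i) ?_).symm
      rw [hg]
      simp only
      rw [if_neg (show ¬ (0:ℤ) ≤ z i from not_le.mpr hi)]
  have keyterm : ∀ w : Fin n → ℤ, (0 : Fin n → ℤ) ≤ w → ∀ z : Fin n → ℤ,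
      (∏ i, ∏ j ∈ Finset.range (w i).toNat, θ i (z i - j)) * ν z
        = (∏ i, c i ^ (w i).toNat) * ν (z - w) := by
    intro w hw z
    rw [hνg z, hνg (z - w), ← Finset.prod_mul_distrib, ← Finset.prod_mul_distrib]
    apply Finset.prod_congr rfl
    intro i _
    have : (z - w) i = z i - w i := rfl
    rw [this]
    exact key1 (θ i) (hθ0 i) (c i) (w i) (z i) (hw i)
  have hxy : ∀ e ∈ R.filter (fun e => e.2 = y), x + e.1 - y - e.1 = x - y := by
    intro e _
    funext i
    simp only [Pi.sub_apply, Pi.add_apply]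
    ring
  calc ∑ e ∈ R.filter (fun e => e.1 = y), Λ e x * ν x
      = ∑ e ∈ R.filter (fun e => e.1 = y),
          (κ e * ∏ i, c i ^ (y i).toNat) * ν (x - y) := by
        apply Finset.sum_congr rfl
        intro e he
        rw [Finset.mem_filter] at he
        rw [hΛ, he.2, mul_assoc, keyterm y (hCnn y hy) x, ← mul_assoc]
    _ = (∑ e ∈ R.filter (fun e => e.1 = y), κ e * ∏ i, c i ^ (y i).toNat) * ν (x - y) := by
        rw [Finset.sum_mul]
    _ = (∑ e ∈ R.filter (fun e => e.2 = y), κ e * ∏ i, c i ^ (e.1 i).toNat) * ν (x - y) := by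
        rw [hcb y hy]
    _ = ∑ e ∈ R.filter (fun e => e.2 = y),
          (κ e * ∏ i, c i ^ (e.1 i).toNat) * ν (x - y) := by
        rw [Finset.sum_mul]
    _ = ∑ e ∈ R.filter (fun e => e.2 = y), Λ e (x + e.1 - y) * ν (x + e.1 - y) := by
        apply Finset.sum_congr rfl
        intro e he
        have heR := (Finset.mem_filter.mp he).1
        have he1nn : (0 : Fin n → ℤ) ≤ e.1 := hCnn e.1 (hR e heR).1
        have h1 := keyterm e.1 he1nn (x + e.1 - y)
        rw [hxy e he] at h1
        symm
        rw [hΛ, mul_assoc, h1, ← mul_assoc]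
end

section
/- For stochastic mass-action kinetics with rate constants κ and the measure ν(x) = c^x / x! (x ∈ ℤ^n_{≥0}, c ∈ ℝ^n_{>0}), the complex balance condition Σ_{y': y→y'} λ_{y→y'}(x) ν(x) = Σ_{y': y'→y} λ_{y'→y}(x+y'-y) ν(x+y'-y) holds for all complexes y and all states x ∈ ℤ^n_{≥0} if and only if for every complex y in the support of the network: Σ_{y': y→y'∈R} κ_{y→y'} c^y = Σ_{y': y'→y∈R} κ_{y'→y} c^{y'}. -/
private lemma aux_factor (c : ℝ) (a b d : ℕ) (h : a = d + b) :
    ((a.factorial : ℝ) / (d.factorial : ℝ)) * (c ^ a / (a.factorial : ℝ))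
      = (c ^ d / (d.factorial : ℝ)) * c ^ b := by
  have ha : (a.factorial : ℝ) ≠ 0 := Nat.cast_ne_zero.mpr a.factorial_ne_zero
  have hd : (d.factorial : ℝ) ≠ 0 := Nat.cast_ne_zero.mpr d.factorial_ne_zero
  subst h
  rw [pow_add]
  field_simp

/-- For stochastic mass-action kinetics with rate constants `κ`
and the measure `ν(x) = c^x / x!` on `ℤ^n_{≥0}` (zero outside), the complex
balance condition holds for all complexes `y ∈ C` and states `x ∈ ℤ^n_{≥0}`
iff for every complex `y` of the network:
`Σ_{y': y→y'∈R} κ_{y→y'} c^y = Σ_{y': y'→y∈R} κ_{y'→y} c^{y'}`. -/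
theorem mass_action_cb_measure_iff_cb_state
    (n : ℕ) [DecidableEq (Fin n → ℤ)]
    (C : Finset (Fin n → ℤ)) (R : Finset ((Fin n → ℤ) × (Fin n → ℤ)))
    (hCnn : ∀ y ∈ C, (0 : Fin n → ℤ) ≤ y)
    (hR : ∀ e ∈ R, e.1 ∈ C ∧ e.2 ∈ C ∧ e.1 ≠ e.2)
    (hcover : ∀ y ∈ C, ∃ e ∈ R, e.1 = y ∨ e.2 = y)
    (κ : (Fin n → ℤ) × (Fin n → ℤ) → ℝ) (hκ : ∀ e ∈ R, 0 < κ e)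
    (Λ : (Fin n → ℤ) × (Fin n → ℤ) → (Fin n → ℤ) → ℝ)
    (hΛ : ∀ e : (Fin n → ℤ) × (Fin n → ℤ), ∀ x : Fin n → ℤ,
      Λ e x = κ e * (if ∀ i, e.1 i ≤ x i then
          ∏ i, ((Nat.factorial (x i).toNat : ℝ)
            / (Nat.factorial ((x i - e.1 i).toNat) : ℝ))
        else 0))
    (c : Fin n → ℝ) (hc : ∀ i, 0 < c i)
    (ν : (Fin n → ℤ) → ℝ)
    (hν : ∀ x : Fin n → ℤ, (0 : Fin n → ℤ) ≤ x →
      ν x = (∏ i, c i ^ (x i).toNat) / ∏ i, (Nat.factorial (x i).toNat : ℝ))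
    (hν0 : ∀ x : Fin n → ℤ, ¬ (0 : Fin n → ℤ) ≤ x → ν x = 0) :
    (∀ y ∈ C, ∀ x : Fin n → ℤ, (0 : Fin n → ℤ) ≤ x →
      ∑ e ∈ R.filter (fun e => e.1 = y), Λ e x * ν x
        = ∑ e ∈ R.filter (fun e => e.2 = y),
            Λ e (x + e.1 - y) * ν (x + e.1 - y))
    ↔
    (∀ y ∈ C,
      ∑ e ∈ R.filter (fun e => e.1 = y), κ e * ∏ i, c i ^ (y i).toNat
        = ∑ e ∈ R.filter (fun e => e.2 = y), κ e * ∏ i, c i ^ (e.1 i).toNat) := by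
  classical
  -- the common positive factor
  set D : (Fin n → ℤ) → (Fin n → ℤ) → ℝ := fun x y =>
    ∏ i, c i ^ ((x i - y i).toNat) / ((((x i - y i).toNat).factorial : ℝ)) with hD
  have hDpos : ∀ x y : Fin n → ℤ, 0 < D x y := by
    intro x y
    apply Finset.prod_pos
    intro i _
    exact div_pos (pow_pos (hc i) _) (by exact_mod_cast Nat.factorial_pos _)
  -- per-term identity for the outgoing sum
  have hL : ∀ y : Fin n → ℤ, (∀ i, 0 ≤ y i) → ∀ x : Fin n → ℤ, (0 : Fin n → ℤ) ≤ x →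
      (∀ i, y i ≤ x i) → ∀ e : (Fin n → ℤ) × (Fin n → ℤ), e.1 = y →
      Λ e x * ν x = D x y * (κ e * ∏ i, c i ^ (y i).toNat) := by
    intro y hy x hx hyx e he
    rw [hΛ, hν x hx, he, if_pos hyx]
    rw [mul_assoc, ← Finset.prod_div_distrib, ← Finset.prod_mul_distrib]
    have hprod : (∏ i, ((((x i).toNat).factorial : ℝ) / (((x i - y i).toNat).factorial : ℝ))
          * (c i ^ (x i).toNat / (((x i).toNat).factorial : ℝ)))
        = ∏ i, (c i ^ ((x i - y i).toNat) / (((x i - y i).toNat).factorial : ℝ))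
          * c i ^ (y i).toNat := by
      apply Finset.prod_congr rfl
      intro i _
      exact aux_factor (c i) _ _ _ (by have := hy i; have := hyx i; omega)
    rw [hprod, Finset.prod_mul_distrib, hD]
    ring
  -- per-term identity for the incoming sum
  have hRt : ∀ y : Fin n → ℤ, (∀ i, 0 ≤ y i) → ∀ x : Fin n → ℤ,
      (∀ i, y i ≤ x i) → ∀ e : (Fin n → ℤ) × (Fin n → ℤ), e.2 = y → (∀ i, 0 ≤ e.1 i) →
      Λ e (x + e.1 - y) * ν (x + e.1 - y)
        = D x y * (κ e * ∏ i, c i ^ ((e.1 i).toNat)) := by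
    intro y hy x hyx e he he1
    set z : Fin n → ℤ := x + e.1 - y with hz
    have hzi : ∀ i, z i = x i + e.1 i - y i := by
      intro i; simp [hz]
    have hz0 : (0 : Fin n → ℤ) ≤ z := by
      intro i
      have := hyx i; have := he1 i
      simp only [hzi, Pi.zero_apply]
      omega
    have hind : ∀ i, e.1 i ≤ z i := by
      intro i; have := hyx i; rw [hzi]; omega
    rw [hΛ, hν z hz0, if_pos hind]
    rw [mul_assoc, ← Finset.prod_div_distrib, ← Finset.prod_mul_distrib]
    have hprod : (∏ i, ((((z i).toNat).factorial : ℝ) / (((z i - e.1 i).toNat).factorial : ℝ))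
          * (c i ^ (z i).toNat / (((z i).toNat).factorial : ℝ)))
        = ∏ i, (c i ^ ((x i - y i).toNat) / (((x i - y i).toNat).factorial : ℝ))
          * c i ^ ((e.1 i).toNat) := by
      apply Finset.prod_congr rfl
      intro i _
      have h1 : (z i - e.1 i).toNat = (x i - y i).toNat := by
        rw [hzi]; omega
      have h2 : (z i).toNat = (x i - y i).toNat + (e.1 i).toNat := by
        have := hy i; have := hyx i; have := he1 i
        rw [hzi]; omega
      rw [h1]
      exact aux_factor (c i) _ _ _ h2
    rw [hprod, Finset.prod_mul_distrib, hD]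
    ring
  -- zero cases when ¬ (y ≤ x)
  have hL0 : ∀ y x : Fin n → ℤ, (¬ ∀ i, y i ≤ x i) →
      ∀ e : (Fin n → ℤ) × (Fin n → ℤ), e.1 = y → Λ e x * ν x = 0 := by
    intro y x hyx e he
    rw [hΛ, he, if_neg hyx, mul_zero, zero_mul]
  have hR0 : ∀ y x : Fin n → ℤ, (¬ ∀ i, y i ≤ x i) →
      ∀ e : (Fin n → ℤ) × (Fin n → ℤ), e.2 = y →
      Λ e (x + e.1 - y) * ν (x + e.1 - y) = 0 := by
    intro y x hyx e he
    rw [hΛ, if_neg, mul_zero, zero_mul]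
    intro h
    apply hyx
    intro i
    have := h i
    simp only [Pi.sub_apply, Pi.add_apply] at this
    omega
  -- sum identities
  have hsumL : ∀ y ∈ C, ∀ x : Fin n → ℤ, (0 : Fin n → ℤ) ≤ x → (∀ i, y i ≤ x i) →
      ∑ e ∈ R.filter (fun e => e.1 = y), Λ e x * ν x
        = D x y * ∑ e ∈ R.filter (fun e => e.1 = y), κ e * ∏ i, c i ^ (y i).toNat := by
    intro y hy x hx hyx
    rw [Finset.mul_sum]
    apply Finset.sum_congr rfl
    intro e heR
    rw [Finset.mem_filter] at heR
    exact hL y (fun i => hCnn y hy i) x hx hyx e heR.2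
  have hsumR : ∀ y ∈ C, ∀ x : Fin n → ℤ, (∀ i, y i ≤ x i) →
      ∑ e ∈ R.filter (fun e => e.2 = y), Λ e (x + e.1 - y) * ν (x + e.1 - y)
        = D x y * ∑ e ∈ R.filter (fun e => e.2 = y), κ e * ∏ i, c i ^ ((e.1 i).toNat) := by
    intro y hy x hyx
    rw [Finset.mul_sum]
    apply Finset.sum_congr rfl
    intro e heR
    rw [Finset.mem_filter] at heR
    exact hRt y (fun i => hCnn _ hy i) x hyx e heR.2
      (fun i => hCnn _ (hR e heR.1).1 i)
  constructor
  · intro h y hyC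
    have hy0 : (0 : Fin n → ℤ) ≤ y := hCnn y hyC
    have hyy : ∀ i, y i ≤ y i := fun i => le_refl _
    have := h y hyC y hy0
    rw [hsumL y hyC y hy0 hyy, hsumR y hyC y hyy] at this
    exact mul_left_cancel₀ (hDpos y y).ne' this
  · intro h y hyC x hx
    by_cases hyx : ∀ i, y i ≤ x i
    · rw [hsumL y hyC x hx hyx, hsumR y hyC x hyx, h y hyC]
    · rw [Finset.sum_congr rfl fun e he => hL0 y x hyx e (Finset.mem_filter.mp he).2,
        Finset.sum_congr rfl fun e he => hR0 y x hyx e (Finset.mem_filter.mp he).2,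
        Finset.sum_const_zero, Finset.sum_const_zero]
end

section
/- Let G = (S, C, R) be a reaction network with n species and m complexes, and define the network G̃ = (S̃, C̃, R̃) with species S̃ = S ∪ {A_y : y ∈ C}, complexes C̃ = {y + A_y : y ∈ C}, and reactions R̃ = {y + A_y → y' + A_{y'} : y → y' ∈ R}, where each A_y is a new distinct species. Then the deficiency of G̃ is zero. -/
open scoped Classical
set_option linter.unusedSectionVars false

variable {V : Type*} [Fintype V] [DecidableEq V]

noncomputable def compSum (G : SimpleGraph V) : (V → ℝ) →ₗ[ℝ] (G.ConnectedComponent → ℝ) where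
  toFun x K := ∑ v, if G.connectedComponentMk v = K then x v else 0
  map_add' x y := by
    funext K
    simp only [Pi.add_apply]
    rw [← Finset.sum_add_distrib]
    exact Finset.sum_congr rfl fun v _ => by split_ifs <;> simp
  map_smul' c x := by
    funext K
    simp only [RingHom.id_apply, Pi.smul_apply, smul_eq_mul, Finset.mul_sum]
    exact Finset.sum_congr rfl fun v _ => by split_ifs <;> simp

lemma compSum_apply (G : SimpleGraph V) (x : V → ℝ) (K : G.ConnectedComponent) :
    compSum G x K = ∑ v, if G.connectedComponentMk v = K then x v else 0 := rfl

def edgeSet' (G : SimpleGraph V) : Set (V → ℝ) :=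
  {x | ∃ a b, G.Adj a b ∧ x = Pi.single b 1 - Pi.single a 1}

lemma reachable_mem (G : SimpleGraph V) {a b : V} (h : G.Reachable a b) :
    Pi.single b (1:ℝ) - Pi.single a 1 ∈ Submodule.span ℝ (edgeSet' G) := by
  obtain ⟨p⟩ := h
  induction p with
  | nil => simp
  | @cons a c b hadj p ih =>
      have h1 : Pi.single c (1:ℝ) - Pi.single a 1 ∈ Submodule.span ℝ (edgeSet' G) :=
        Submodule.subset_span ⟨a, c, hadj, rfl⟩
      have := Submodule.add_mem _ ih h1
      rwa [sub_add_sub_cancel] at this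

lemma sum_single_ite (G : SimpleGraph V) (K : G.ConnectedComponent) (w : V) :
    (∑ v, if G.connectedComponentMk v = K then (Pi.single w (1:ℝ)) v else 0)
      = if G.connectedComponentMk w = K then (1:ℝ) else 0 := by
  rw [Finset.sum_eq_single w]
  · simp
  · intro v _ hv; rw [Pi.single_apply, if_neg hv]; simp
  · simp

lemma span_eq_ker (G : SimpleGraph V) :
    Submodule.span ℝ (edgeSet' G) = LinearMap.ker (compSum G) := by
  apply le_antisymm
  · rw [Submodule.span_le]
    rintro x ⟨a, b, hab, rfl⟩
    simp only [SetLike.mem_coe, LinearMap.mem_ker]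
    funext K
    have hsame : G.connectedComponentMk a = G.connectedComponentMk b :=
      SimpleGraph.ConnectedComponent.sound hab.reachable
    rw [compSum_apply]
    have : ∀ v : V, (if G.connectedComponentMk v = K then ((Pi.single b 1 - Pi.single a 1 : V → ℝ) v) else 0)
        = (if G.connectedComponentMk v = K then (Pi.single b 1 : V → ℝ) v else 0)
          - (if G.connectedComponentMk v = K then (Pi.single a 1 : V → ℝ) v else 0) := by
      intro v; split_ifs <;> simp
    rw [Finset.sum_congr rfl fun v _ => this v, Finset.sum_sub_distrib,
      sum_single_ite, sum_single_ite, hsame, sub_self]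
    rfl
  · intro x hx
    simp only [LinearMap.mem_ker] at hx
    have h2 : (∑ v, Pi.single (G.connectedComponentMk v).out (x v) : V → ℝ) = 0 := by
      have hf := Fintype.sum_fiberwise (fun v => G.connectedComponentMk v)
          (fun v => (Pi.single (G.connectedComponentMk v).out (x v) : V → ℝ))
      rw [← hf]
      apply Finset.sum_eq_zero
      intro K _
      have e1 : (∑ v : {v // G.connectedComponentMk v = K},
          (Pi.single (G.connectedComponentMk v.1).out (x v.1) : V → ℝ))
          = Pi.single K.out (∑ v : {v // G.connectedComponentMk v = K}, x v.1) := by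
        calc (∑ v : {v // G.connectedComponentMk v = K},
              (Pi.single (G.connectedComponentMk v.1).out (x v.1) : V → ℝ))
            = ∑ v : {v // G.connectedComponentMk v = K},
              (LinearMap.single ℝ (fun _ : V => ℝ) K.out) (x v.1) :=
              Finset.sum_congr rfl fun v _ => by rw [v.2]; rfl
          _ = (LinearMap.single ℝ (fun _ : V => ℝ) K.out)
              (∑ v : {v // G.connectedComponentMk v = K}, x v.1) := (map_sum _ _ _).symm
          _ = Pi.single K.out (∑ v : {v // G.connectedComponentMk v = K}, x v.1) := rfl
      rw [e1]
      have e2 : (∑ v : {v // G.connectedComponentMk v = K}, x v.1) = (compSum G) x K := by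
        rw [compSum_apply, ← Finset.sum_filter (fun v => G.connectedComponentMk v = K) x]
        exact (Finset.sum_subtype _ (fun v => by simp) x).symm
      rw [e2, hx]; simp
    have key : x = ∑ v, x v • (Pi.single v 1 - Pi.single (G.connectedComponentMk v).out 1 : V → ℝ) := by
      have : (∑ v, x v • (Pi.single v 1 - Pi.single (G.connectedComponentMk v).out 1 : V → ℝ))
          = ∑ v, (Pi.single v (x v) - Pi.single (G.connectedComponentMk v).out (x v)) := by
        refine Finset.sum_congr rfl fun v _ => ?_
        rw [smul_sub, ← Pi.single_smul, ← Pi.single_smul]; simp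
      rw [this, Finset.sum_sub_distrib, Finset.univ_sum_single, h2, sub_zero]
    rw [key]
    refine Submodule.sum_mem _ fun v _ => Submodule.smul_mem _ _
      (reachable_mem G (SimpleGraph.ConnectedComponent.exact ?_))
    exact Quot.out_eq _

lemma graph_rank (G : SimpleGraph V) :
    Nat.card G.ConnectedComponent
      + Module.finrank ℝ (Submodule.span ℝ (edgeSet' G)) = Fintype.card V := by
  haveI : Fintype G.ConnectedComponent := Fintype.ofFinite _
  have hsurj : Function.Surjective (compSum G) := by
    intro y
    refine ⟨fun v => if v = (G.connectedComponentMk v).out then y (G.connectedComponentMk v) else 0, ?_⟩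
    funext K
    rw [compSum_apply]
    have : ∀ v : V, (if G.connectedComponentMk v = K then
        (if v = (G.connectedComponentMk v).out then y (G.connectedComponentMk v) else 0) else 0)
        = if v = K.out then y K else 0 := by
      intro v
      by_cases hv : v = K.out
      · subst hv
        have hout : G.connectedComponentMk K.out = K := Quot.out_eq K
        simp [hout]
      · rw [if_neg hv]
        by_cases hm : G.connectedComponentMk v = K
        · rw [if_pos hm, hm, if_neg hv]
        · rw [if_neg hm]
    rw [Finset.sum_congr rfl fun v _ => this v,
      Finset.sum_ite_eq' Finset.univ K.out (fun _ => y K)]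
    simp
  have hrn := LinearMap.finrank_range_add_finrank_ker (compSum G)
  rw [LinearMap.range_eq_top.mpr hsurj, finrank_top, Module.finrank_pi, Module.finrank_pi] at hrn
  rw [span_eq_ker, Nat.card_eq_fintype_card]
  exact hrn

noncomputable def liftMap {n : ℕ} {Z W : Type*} [Fintype Z] (vert : Z → W)
    (c : Z → (Fin n → ℤ)) : (W → ℝ) →ₗ[ℝ] (Fin n → ℝ) × (Z → ℝ) where
  toFun x := (fun i => ∑ z, x (vert z) * ((c z i : ℤ) : ℝ), fun z => x (vert z))
  map_add' x y := by
    refine Prod.ext ?_ rfl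
    funext i
    simp [add_mul, Finset.sum_add_distrib]
  map_smul' r x := by
    refine Prod.ext ?_ rfl
    funext i
    simp [Finset.mul_sum, mul_assoc]

lemma liftMap_injective {n : ℕ} {Z W : Type*} [Fintype Z] {vert : Z → W}
    (hsurj : Function.Surjective vert) (c : Z → (Fin n → ℤ)) :
    Function.Injective (liftMap vert c) := by
  intro x y hxy
  have h2 : ∀ z, x (vert z) = y (vert z) := fun z => congrFun (congrArg Prod.snd hxy) z
  funext w
  obtain ⟨z, rfl⟩ := hsurj w
  exact h2 z

/-- The network `G̃` obtained from `G` by adding a new distinct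
species `A_y` to each complex `y` (complexes `y + A_y`, reactions
`y + A_y → y' + A_{y'}`) has deficiency zero: `m̃ - ℓ̃ - dim S̃ = 0`, i.e. the
number of complexes of `G̃` equals the number of connected components of its
reaction graph plus the dimension of its stoichiometric subspace. -/
theorem tilde_network_deficiency_zero
    (n : ℕ) [DecidableEq (Fin n → ℤ)]
    (C : Finset (Fin n → ℤ)) (R : Finset ((Fin n → ℤ) × (Fin n → ℤ)))
    (hCnn : ∀ y ∈ C, (0 : Fin n → ℤ) ≤ y)
    (hR : ∀ e ∈ R, e.1 ∈ C ∧ e.2 ∈ C ∧ e.1 ≠ e.2)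
    (hcover : ∀ y ∈ C, ∃ e ∈ R, e.1 = y ∨ e.2 = y)
    (Emb : {y // y ∈ C} → (Fin n → ℤ) × ({y // y ∈ C} → ℤ))
    (hEmb : ∀ y : {y // y ∈ C},
      Emb y = ((y : Fin n → ℤ), fun z => if z = y then 1 else 0))
    (Ct : Finset ((Fin n → ℤ) × ({y // y ∈ C} → ℤ)))
    (hCt : Ct = Finset.univ.image Emb)
    (G : SimpleGraph {w // w ∈ Ct})
    (hG : ∀ a b : {w // w ∈ Ct}, G.Adj a b ↔
      ∃ e ∈ R, ((a : (Fin n → ℤ) × ({y // y ∈ C} → ℤ)).1 = e.1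
          ∧ (b : (Fin n → ℤ) × ({y // y ∈ C} → ℤ)).1 = e.2)
        ∨ ((a : (Fin n → ℤ) × ({y // y ∈ C} → ℤ)).1 = e.2
          ∧ (b : (Fin n → ℤ) × ({y // y ∈ C} → ℤ)).1 = e.1)) :
    Nat.card G.ConnectedComponent
      + Module.finrank ℝ (Submodule.span ℝ
          {v : (Fin n → ℝ) × ({y // y ∈ C} → ℝ) | ∃ e ∈ R,
            v = ((fun i => ((e.2 i - e.1 i : ℤ) : ℝ)),
                 (fun z : {y // y ∈ C} => (if (z : Fin n → ℤ) = e.2 then (1:ℝ) else 0)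
                   - (if (z : Fin n → ℤ) = e.1 then (1:ℝ) else 0)))})
      = Ct.card := by
  classical
  have vertmem : ∀ z : {y // y ∈ C}, Emb z ∈ Ct := by
    intro z; rw [hCt]; exact Finset.mem_image_of_mem _ (Finset.mem_univ z)
  set vert : {y // y ∈ C} → {w // w ∈ Ct} := fun z => ⟨Emb z, vertmem z⟩ with hvert
  have hv1 : ∀ z : {y // y ∈ C},
      ((vert z : (Fin n → ℤ) × ({y // y ∈ C} → ℤ))).1 = (z : Fin n → ℤ) := by
    intro z; show (Emb z).1 = _; rw [hEmb]
  have hvsurj : Function.Surjective vert := by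
    intro w
    have hw : (w : (Fin n → ℤ) × ({y // y ∈ C} → ℤ)) ∈ Finset.univ.image Emb := by
      rw [← hCt]; exact w.2
    obtain ⟨z, _, hz⟩ := Finset.mem_image.mp hw
    exact ⟨z, Subtype.ext hz⟩
  have hvinj : Function.Injective vert := by
    intro z z' h
    have h1 : (Emb z).1 = (Emb z').1 := congrArg Prod.fst (Subtype.ext_iff.mp h)
    rw [hEmb, hEmb] at h1
    exact Subtype.ext h1
  set F := liftMap vert (fun z : {y // y ∈ C} => (z : Fin n → ℤ)) with hF
  have Fdiff : ∀ (z1 z2 : {y // y ∈ C}) (e : (Fin n → ℤ) × (Fin n → ℤ)),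
      (z1 : Fin n → ℤ) = e.1 → (z2 : Fin n → ℤ) = e.2 →
      F (Pi.single (vert z2) 1 - Pi.single (vert z1) 1)
        = ((fun i => ((e.2 i - e.1 i : ℤ) : ℝ)),
           (fun z : {y // y ∈ C} => (if (z : Fin n → ℤ) = e.2 then (1:ℝ) else 0)
             - (if (z : Fin n → ℤ) = e.1 then (1:ℝ) else 0))) := by
    intro z1 z2 e h1 h2
    have hz1 : ∀ z : {y // y ∈ C}, ((z : Fin n → ℤ) = e.1) ↔ z = z1 := by
      intro z; rw [← h1]; exact ⟨fun h => Subtype.ext h, fun h => by rw [h]⟩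
    have hz2 : ∀ z : {y // y ∈ C}, ((z : Fin n → ℤ) = e.2) ↔ z = z2 := by
      intro z; rw [← h2]; exact ⟨fun h => Subtype.ext h, fun h => by rw [h]⟩
    have hsingle : ∀ (z0 z : {y // y ∈ C}),
        (Pi.single (vert z0) (1:ℝ) : {w // w ∈ Ct} → ℝ) (vert z) = if z = z0 then 1 else 0 := by
      intro z0 z
      rw [Pi.single_apply]
      by_cases h : z = z0
      · rw [if_pos, if_pos h]; rw [h]
      · rw [if_neg, if_neg h]; exact fun hc => h (hvinj hc)
    refine Prod.ext ?_ ?_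
    · funext i
      show (∑ z : {y // y ∈ C},
        ((Pi.single (vert z2) 1 - Pi.single (vert z1) 1 : _ → ℝ) (vert z))
          * ((z : Fin n → ℤ) i : ℝ)) = _
      have : ∀ z : {y // y ∈ C},
          ((Pi.single (vert z2) 1 - Pi.single (vert z1) 1 : _ → ℝ) (vert z))
            * ((z : Fin n → ℤ) i : ℝ)
          = (if z = z2 then ((z : Fin n → ℤ) i : ℝ) else 0)
            - (if z = z1 then ((z : Fin n → ℤ) i : ℝ) else 0) := by
        intro z
        rw [Pi.sub_apply, hsingle, hsingle, sub_mul]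
        congr 1 <;> (split_ifs <;> simp)
      rw [Finset.sum_congr rfl fun z _ => this z, Finset.sum_sub_distrib,
        Finset.sum_ite_eq' Finset.univ z2 (fun z => ((z : Fin n → ℤ) i : ℝ)),
        Finset.sum_ite_eq' Finset.univ z1 (fun z => ((z : Fin n → ℤ) i : ℝ))]
      simp only [Finset.mem_univ, if_pos]
      rw [h1, h2]
      push_cast
      ring
    · funext z
      show ((Pi.single (vert z2) 1 - Pi.single (vert z1) 1 : _ → ℝ) (vert z)) = _
      rw [Pi.sub_apply, hsingle, hsingle]
      congr 1
      · rw [if_congr (hz2 z).symm rfl rfl]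
      · rw [if_congr (hz1 z).symm rfl rfl]
  -- span equality
  have hspan : Submodule.map F (Submodule.span ℝ (edgeSet' G))
      = Submodule.span ℝ {v : (Fin n → ℝ) × ({y // y ∈ C} → ℝ) | ∃ e ∈ R,
            v = ((fun i => ((e.2 i - e.1 i : ℤ) : ℝ)),
                 (fun z : {y // y ∈ C} => (if (z : Fin n → ℤ) = e.2 then (1:ℝ) else 0)
                   - (if (z : Fin n → ℤ) = e.1 then (1:ℝ) else 0)))} := by
    rw [Submodule.map_span]
    apply le_antisymm <;> rw [Submodule.span_le]
    · rintro - ⟨x, ⟨a, b, hab, rfl⟩, rfl⟩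
      obtain ⟨e, heR, hcase⟩ := (hG a b).mp hab
      obtain ⟨za, rfl⟩ := hvsurj a
      obtain ⟨zb, rfl⟩ := hvsurj b
      rw [hv1, hv1] at hcase
      rcases hcase with ⟨ha, hb⟩ | ⟨ha, hb⟩
      · exact Submodule.subset_span ⟨e, heR, Fdiff za zb e ha hb⟩
      · have : F (Pi.single (vert zb) 1 - Pi.single (vert za) 1)
            = -(F (Pi.single (vert za) 1 - Pi.single (vert zb) 1)) := by
          rw [← map_neg, neg_sub]
        rw [this, Fdiff zb za e hb ha]
        exact Submodule.neg_mem _ (Submodule.subset_span ⟨e, heR, rfl⟩)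
    · rintro - ⟨e, heR, rfl⟩
      obtain ⟨h1, h2, hne⟩ := hR e heR
      set za : {y // y ∈ C} := ⟨e.1, h1⟩
      set zb : {y // y ∈ C} := ⟨e.2, h2⟩
      have hadj : G.Adj (vert za) (vert zb) := by
        rw [hG]
        exact ⟨e, heR, Or.inl ⟨hv1 za, hv1 zb⟩⟩
      exact Submodule.subset_span
        ⟨Pi.single (vert zb) 1 - Pi.single (vert za) 1,
          ⟨vert za, vert zb, hadj, rfl⟩, Fdiff za zb e rfl rfl⟩
  have hFinj : Function.Injective F := liftMap_injective hvsurj _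
  have hrank : Module.finrank ℝ (Submodule.map F (Submodule.span ℝ (edgeSet' G)))
      = Module.finrank ℝ (Submodule.span ℝ (edgeSet' G)) :=
    (LinearEquiv.finrank_eq (Submodule.equivMapOfInjective F hFinj _)).symm
  rw [← hspan, hrank, graph_rank G, Fintype.card_coe]
end

section
/- Let (G, K^S_κ) be a stochastic mass-action system and ν(x) = c^x/x! with c ∈ ℝ^n_{>0}. If there exists an active copy f of G such that f + v is node balanced with respect to (K^S_κ, ν) for all v in a set Ξ ⊆ ℤ^n_{≥0} with the property that the only polynomial of degree at most d = max{‖y‖₁ : y → y' ∈ R} vanishing on Ξ is the zero polynomial, then ν is a complex balanced measure. -/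
/-!
For the product-form measure every stochastic flux is a deterministic one in disguise:
`Λ_{y→y'}(x) ν(x) = κ_{y→y'} c^y ν(x - y)`. Hence `ν` is complex balanced iff `c` is a complex
balanced equilibrium of the deterministic system, i.e. iff the defect
`Σ_{y→y'} κ_{y→y'} c^y - Σ_{y'→y} κ_{y'→y} c^{y'}` vanishes at every complex `y`.

Node balance of `f + v` at the node `X + v` says, after division by `ν(X + v)`, that the
polynomial `Σ_{f y = X} (defect y / c^y) (X + v)^{\underline y}` in `v` vanishes on `Ξ`. These
falling factorials have pairwise distinct leading monomials `v^y`, so the polynomial is nonzero as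
soon as one defect at the node is. Its degree is kept at most `d` by the choice of the node:
`f y - y` is constant along reactions, so minimising `Σᵢ (f y - y)ᵢ` over the unbalanced complexes
singles out a reaction-closed set on which the defects sum to zero. It contains a complex `y₀` of
positive defect, necessarily a source, so `‖y₀‖₁ ≤ d`, and every unbalanced complex at the node
`f y₀` is no larger than `y₀`.
-/

open MvPolynomial Finset

theorem MonomialOrder.sum_C_mul_ne_zero {σ ι R : Type*} [CommSemiring R] (m : MonomialOrder σ)
    {s : Finset ι} (hs : s.Nonempty) {a : ι → R} (ha : ∀ i ∈ s, a i ≠ 0)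
    {p : ι → MvPolynomial σ R} (hp : ∀ i ∈ s, m.Monic (p i))
    (hinj : Set.InjOn (fun i => m.degree (p i)) s) :
    ∑ i ∈ s, C (a i) * p i ≠ 0 := by
  obtain ⟨i₀, hi₀, hmax⟩ := s.exists_max_image (fun i => m.toSyn (m.degree (p i))) hs
  have hcoeff : (∑ i ∈ s, C (a i) * p i).coeff (m.degree (p i₀)) = a i₀ := by
    rw [coeff_sum, sum_eq_single_of_mem i₀ hi₀, coeff_C_mul, (hp i₀ hi₀).coeff_degree, mul_one]
    intro i hi hne
    rw [coeff_C_mul, m.coeff_eq_zero_of_lt, mul_zero]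
    exact (hmax i hi).lt_of_ne fun h => hne (hinj hi hi₀ (m.toSyn.injective h))
  intro h
  exact ha i₀ hi₀ (by rw [← hcoeff, h, coeff_zero])

section FallingFactorial

variable {ι K : Type*} [Fintype ι] [CommRing K]

variable (K) in
noncomputable def fallingFactorialPoly (a : ι → ℤ) (k : ι → ℕ) : MvPolynomial ι K :=
  ∏ i, ∏ j ∈ range (k i), (X i + C ((a i : K) - j))

theorem eval_fallingFactorialPoly (a : ι → ℤ) (k : ι → ℕ) {v : ι → ℤ} (hv : 0 ≤ a + v) :
    eval (fun i => (v i : K)) (fallingFactorialPoly K a k)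
      = ∏ i, ((a i + v i).toNat.descFactorial (k i) : K) := by
  rw [fallingFactorialPoly, map_prod]
  refine prod_congr rfl fun i _ => ?_
  have hcast : (((a i + v i).toNat : ℕ) : K) = a i + v i := by
    have hi : 0 ≤ a i + v i := hv i
    rw [← Int.cast_natCast, Int.toNat_of_nonneg hi, Int.cast_add]
  rw [← descPochhammer_eval_eq_descFactorial, descPochhammer_eval_eq_prod_range, map_prod, hcast]
  refine prod_congr rfl fun j _ => ?_
  rw [map_add, eval_X, eval_C]
  ring

theorem totalDegree_fallingFactorialPoly_le [Nontrivial K] (a : ι → ℤ) (k : ι → ℕ) :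
    (fallingFactorialPoly K a k).totalDegree ≤ ∑ i, k i := by
  refine (totalDegree_finsetProd _ _).trans (sum_le_sum fun i _ => ?_)
  refine (totalDegree_finsetProd _ _).trans ?_
  refine (sum_le_card_nsmul _ _ 1 fun j _ => ?_).trans (by simp)
  exact (totalDegree_add _ _).trans (max_le (totalDegree_X i).le (by rw [totalDegree_C]; omega))

section MonomialOrder

variable (m : MonomialOrder ι)

theorem monic_fallingFactorialPoly (a : ι → ℤ) (k : ι → ℕ) :
    m.Monic (fallingFactorialPoly K a k) :=
  MonomialOrder.Monic.prod fun i _ => MonomialOrder.Monic.prod fun _ _ => m.monic_X_add_C i _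

theorem degree_fallingFactorialPoly [IsDomain K] (a : ι → ℤ) (k : ι → ℕ) :
    m.degree (fallingFactorialPoly K a k) = Finsupp.equivFunOnFinite.symm k := by
  rw [fallingFactorialPoly, m.degree_prod fun i _ => (MonomialOrder.Monic.prod fun _ _ =>
    m.monic_X_add_C i _).ne_zero]
  rw [Finsupp.equivFunOnFinite_symm_eq_sum]
  refine sum_congr rfl fun i _ => ?_
  rw [m.degree_prod fun _ _ => (m.monic_X_add_C i _).ne_zero]
  simp only [m.degree_X_add_C, sum_const, card_range, Finsupp.smul_single, smul_eq_mul, mul_one]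

end MonomialOrder

theorem sum_C_mul_fallingFactorialPoly_ne_zero [IsDomain K] (a : ι → ℤ) {S : Finset (ι → ℤ)}
    (hS : ∀ y ∈ S, 0 ≤ y) {b : (ι → ℤ) → K} (hb : ∃ y ∈ S, b y ≠ 0) :
    ∑ y ∈ S, C (b y) * fallingFactorialPoly K a (fun i => (y i).toNat) ≠ 0 := by
  classical
  let : LinearOrder ι := IsWellOrder.linearOrder WellOrderingRel
  rw [← sum_filter_of_ne (p := fun y => b y ≠ 0) fun y _ hy => ?_]
  · obtain ⟨y, hy, hby⟩ := hb
    refine MonomialOrder.lex.sum_C_mul_ne_zero ⟨y, mem_filter.2 ⟨hy, hby⟩⟩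
      (fun y hy => (mem_filter.1 hy).2) (fun _ _ => monic_fallingFactorialPoly _ _ _) ?_
    intro y hy y' hy' h
    simp only [degree_fallingFactorialPoly, EmbeddingLike.apply_eq_iff_eq] at h
    funext i
    have := congrFun h i
    have := hS y (mem_filter.1 hy).1 i
    have := hS y' (mem_filter.1 hy').1 i
    simp only [Pi.zero_apply] at *
    omega
  · intro hby
    exact hy (by rw [hby, map_zero, zero_mul])

theorem totalDegree_sum_C_mul_fallingFactorialPoly_le [Nontrivial K] (a : ι → ℤ)
    {S : Finset (ι → ℤ)} {b : (ι → ℤ) → K} {d : ℕ} (hd : ∀ y ∈ S, b y ≠ 0 → ∑ i, (y i).toNat ≤ d) :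
    (∑ y ∈ S, C (b y) * fallingFactorialPoly K a (fun i => (y i).toNat)).totalDegree ≤ d := by
  refine (totalDegree_finsetSum _ _).trans (Finset.sup_le fun y hy => ?_)
  by_cases hby : b y = 0
  · rw [hby, map_zero, zero_mul, totalDegree_zero]
    exact Nat.zero_le d
  · refine (totalDegree_mul _ _).trans ?_
    rw [totalDegree_C, zero_add]
    exact (totalDegree_fallingFactorialPoly_le _ _).trans (hd y hy hby)

theorem eval_sum_C_mul_fallingFactorialPoly (a : ι → ℤ) (S : Finset (ι → ℤ))
    (b : (ι → ℤ) → K) {v : ι → ℤ} (hv : 0 ≤ a + v) :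
    eval (fun i => (v i : K)) (∑ y ∈ S, C (b y) * fallingFactorialPoly K a (fun i => (y i).toNat))
      = ∑ y ∈ S, b y * ∏ i, ((a i + v i).toNat.descFactorial (y i).toNat : K) := by
  simp only [map_sum, map_mul, eval_C, eval_fallingFactorialPoly _ _ hv]

end FallingFactorial

section MassAction

variable {ι : Type*} [Fintype ι]

open Nat

noncomputable def vecPow (c : ι → ℝ) (y : ι → ℤ) : ℝ := ∏ i, c i ^ (y i).toNat

noncomputable def vecDescFactorial (x y : ι → ℤ) : ℝ :=
  ∏ i, ((x i).toNat.descFactorial (y i).toNat : ℝ)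

noncomputable def massActionRate (κ : (ι → ℤ) × (ι → ℤ) → ℝ) (e : (ι → ℤ) × (ι → ℤ))
    (x : ι → ℤ) : ℝ :=
  κ e * (if ∀ i, e.1 i ≤ x i then
    ∏ i, ((Nat.factorial (x i).toNat : ℝ) / (Nat.factorial ((x i - e.1 i).toNat) : ℝ)) else 0)

open Classical in
noncomputable def productPoisson (c : ι → ℝ) (x : ι → ℤ) : ℝ :=
  if 0 ≤ x then ∏ i, c i ^ (x i).toNat / ((x i).toNat ! : ℝ) else 0

theorem vecPow_pos {c : ι → ℝ} (hc : ∀ i, 0 < c i) (y : ι → ℤ) : 0 < vecPow c y :=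
  prod_pos fun i _ => pow_pos (hc i) _

theorem productPoisson_pos {c : ι → ℝ} (hc : ∀ i, 0 < c i) {x : ι → ℤ} (hx : 0 ≤ x) :
    0 < productPoisson c x := by
  rw [productPoisson, if_pos hx]
  exact prod_pos fun i _ => div_pos (pow_pos (hc i) _) (by positivity)

theorem productPoisson_of_not_nonneg (c : ι → ℝ) {x : ι → ℤ} (hx : ¬ 0 ≤ x) :
    productPoisson c x = 0 := by
  rw [productPoisson, if_neg hx]

theorem massActionRate_eq_mul_vecDescFactorial (κ : (ι → ℤ) × (ι → ℤ) → ℝ)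
    {e : (ι → ℤ) × (ι → ℤ)} {x : ι → ℤ} (hx : 0 ≤ x) (he : 0 ≤ e.1) :
    massActionRate κ e x = κ e * vecDescFactorial x e.1 := by
  rw [massActionRate, vecDescFactorial]
  congr 1
  split_ifs with hle
  · refine prod_congr rfl fun i _ => ?_
    have hsub : (x i - e.1 i).toNat = (x i).toNat - (e.1 i).toNat := by
      have := hx i; have := he i; have := hle i; simp only [Pi.zero_apply] at *; omega
    have hk : (e.1 i).toNat ≤ (x i).toNat := by
      have := hle i; omega
    rw [div_eq_iff (by positivity), hsub, mul_comm, ← Nat.cast_mul,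
      Nat.factorial_mul_descFactorial hk]
  · push Not at hle
    obtain ⟨i, hi⟩ := hle
    refine (prod_eq_zero (mem_univ i) ?_).symm
    rw [Nat.cast_eq_zero, Nat.descFactorial_eq_zero_iff_lt]
    have := hx i; simp only [Pi.zero_apply] at this; omega

theorem pow_div_factorial_mul_descFactorial {K : Type*} [Field K] [CharZero K] (a : K) {n k : ℕ}
    (hk : k ≤ n) :
    a ^ n / n ! * n.descFactorial k = a ^ k * (a ^ (n - k) / (n - k)!) := by
  rw [← Nat.factorial_mul_descFactorial hk, ← Nat.add_sub_cancel' hk, pow_add,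
    Nat.add_sub_cancel_left]
  have : ((n - k)! : K) ≠ 0 := Nat.cast_ne_zero.2 (Nat.factorial_ne_zero _)
  have : ((k + (n - k)).descFactorial k : K) ≠ 0 := by
    rw [Nat.cast_ne_zero, Ne, Nat.descFactorial_eq_zero_iff_lt]; omega
  push_cast
  field_simp

theorem productPoisson_mul_vecDescFactorial (c : ι → ℝ) {x y : ι → ℤ} (hx : 0 ≤ x)
    (hy : 0 ≤ y) :
    productPoisson c x * vecDescFactorial x y = vecPow c y * productPoisson c (x - y) := by
  by_cases hyx : y ≤ x
  · rw [productPoisson, if_pos hx, productPoisson, if_pos (sub_nonneg.2 hyx), vecPow,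
      vecDescFactorial, ← prod_mul_distrib, ← prod_mul_distrib]
    refine prod_congr rfl fun i _ => ?_
    have hsub : (x i - y i).toNat = (x i).toNat - (y i).toNat := by
      have := hx i; have := hy i; have := hyx i; simp only [Pi.zero_apply] at *; omega
    rw [Pi.sub_apply, hsub, pow_div_factorial_mul_descFactorial]
    have := hyx i; have := hy i; simp only [Pi.zero_apply] at *; omega
  · rw [productPoisson_of_not_nonneg c (x := x - y) (by rwa [sub_nonneg]), mul_zero,
      vecDescFactorial]
    simp only [Pi.le_def, not_forall, not_le] at hyx
    obtain ⟨i, hi⟩ := hyx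
    refine mul_eq_zero_of_right _ (prod_eq_zero (mem_univ i) ?_)
    rw [Nat.cast_eq_zero, Nat.descFactorial_eq_zero_iff_lt]
    have := hx i; simp only [Pi.zero_apply] at this; omega

noncomputable def flux (κ : (ι → ℤ) × (ι → ℤ) → ℝ) (c : ι → ℝ) (e : (ι → ℤ) × (ι → ℤ)) : ℝ :=
  κ e * vecPow c e.1

theorem massActionRate_mul_productPoisson (κ : (ι → ℤ) × (ι → ℤ) → ℝ) (c : ι → ℝ)
    {e : (ι → ℤ) × (ι → ℤ)} (he : 0 ≤ e.1) (x : ι → ℤ) :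
    massActionRate κ e x * productPoisson c x = flux κ c e * productPoisson c (x - e.1) := by
  by_cases hx : 0 ≤ x
  · rw [massActionRate_eq_mul_vecDescFactorial κ hx he, flux, mul_assoc,
      mul_comm (vecDescFactorial x e.1), productPoisson_mul_vecDescFactorial c hx he, mul_assoc]
  · have hxe : ¬ 0 ≤ x - e.1 := fun h => hx (by simpa using add_nonneg h he)
    rw [productPoisson_of_not_nonneg c hx, productPoisson_of_not_nonneg c hxe, mul_zero, mul_zero]

end MassAction

section Balance

variable {ι : Type*} [Fintype ι] [DecidableEq (ι → ℤ)]
  {R : Finset ((ι → ℤ) × (ι → ℤ))} {κ : (ι → ℤ) × (ι → ℤ) → ℝ} {c : ι → ℝ}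
  {Y : Finset (ι → ℤ)} {f : (ι → ℤ) → (ι → ℤ)}

noncomputable def balanceDefect (R : Finset ((ι → ℤ) × (ι → ℤ))) (κ : (ι → ℤ) × (ι → ℤ) → ℝ)
    (c : ι → ℝ) (y : ι → ℤ) : ℝ :=
  ∑ e ∈ R with e.1 = y, flux κ c e - ∑ e ∈ R with e.2 = y, flux κ c e

theorem sum_sub_sum_eq_balanceDefect_mul (hR : ∀ e ∈ R, 0 ≤ e.1) (y x : ι → ℤ) :
    ∑ e ∈ R with e.1 = y, massActionRate κ e x * productPoisson c x
      - ∑ e ∈ R with e.2 = y, massActionRate κ e (x + e.1 - y) * productPoisson c (x + e.1 - y)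
      = balanceDefect R κ c y * productPoisson c (x - y) := by
  rw [balanceDefect, sub_mul, sum_mul, sum_mul]
  congr 1 <;> refine sum_congr rfl fun e he => ?_ <;> obtain ⟨heR, rfl⟩ := mem_filter.1 he <;>
    rw [massActionRate_mul_productPoisson κ c (hR e heR)]
  rw [add_sub_right_comm, add_sub_cancel_right]

theorem sum_balanceDefect_eq_zero_of_closed {S : Finset (ι → ℤ)}
    (hS : ∀ e ∈ R, e.1 ∈ S ↔ e.2 ∈ S) : ∑ y ∈ S, balanceDefect R κ c y = 0 := by
  simp only [balanceDefect, sum_sub_distrib]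
  rw [sum_fiberwise_eq_sum_filter R S Prod.fst, sum_fiberwise_eq_sum_filter R S Prod.snd,
    filter_congr hS, sub_self]

theorem exists_source_of_balanceDefect_pos (hflux : ∀ e ∈ R, 0 ≤ flux κ c e) {y : ι → ℤ}
    (hy : 0 < balanceDefect R κ c y) : ∃ e ∈ R, e.1 = y := by
  have hin : 0 ≤ ∑ e ∈ R with e.2 = y, flux κ c e :=
    sum_nonneg fun e he => hflux e (mem_filter.1 he).1
  obtain ⟨e, he⟩ := nonempty_of_sum_ne_zero (by rw [balanceDefect] at hy; linarith :
    ∑ e ∈ R with e.1 = y, flux κ c e ≠ 0)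
  exact ⟨e, (mem_filter.1 he).1, (mem_filter.1 he).2⟩

theorem sum_balanceDefect_mul_productPoisson_eq_zero (hR : ∀ e ∈ R, e.1 ∈ Y ∧ e.2 ∈ Y)
    (hsrc : ∀ e ∈ R, 0 ≤ e.1) (hcopy : ∀ e ∈ R, f e.2 - f e.1 = e.2 - e.1) {X v : ι → ℤ}
    (hnb : productPoisson c (X + v) * ∑ e ∈ R with f e.1 + v = X + v, massActionRate κ e (X + v)
      = ∑ e ∈ R with f e.2 + v = X + v,
          productPoisson c (f e.1 + v) * massActionRate κ e (f e.1 + v)) :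
    ∑ y ∈ Y with f y = X, balanceDefect R κ c y * productPoisson c (X + v - y) = 0 := by
  have hout : ∑ y ∈ Y with f y = X, ∑ e ∈ R with e.1 = y,
      flux κ c e * productPoisson c (X + v - e.1)
      = productPoisson c (X + v) * ∑ e ∈ R with f e.1 + v = X + v, massActionRate κ e (X + v) := by
    rw [sum_fiberwise_eq_sum_filter R _ Prod.fst, mul_sum]
    refine sum_congr (filter_congr fun e he => ?_) fun e he => ?_
    · simp [(hR e he).1]
    · rw [mul_comm (productPoisson c _), massActionRate_mul_productPoisson κ c
        (hsrc e (mem_filter.1 he).1), mul_comm]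
  have hin : ∑ y ∈ Y with f y = X, ∑ e ∈ R with e.2 = y,
      flux κ c e * productPoisson c (X + v - e.2)
      = ∑ e ∈ R with f e.2 + v = X + v,
          productPoisson c (f e.1 + v) * massActionRate κ e (f e.1 + v) := by
    rw [sum_fiberwise_eq_sum_filter R _ Prod.snd]
    refine sum_congr (filter_congr fun e he => ?_) fun e he => ?_
    · simp [(hR e he).2]
    · obtain ⟨heR, hfe⟩ := mem_filter.1 he
      rw [mul_comm (productPoisson c (f e.1 + v)), massActionRate_mul_productPoisson κ c
        (hsrc e heR), ← hfe, ← sub_add_cancel (f e.2) (f e.1), hcopy e heR]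
      congr 2
      abel
  rw [← sub_eq_zero.2 hnb, ← hout, ← hin, ← sum_sub_distrib]
  refine sum_congr rfl fun y _ => ?_
  rw [balanceDefect, sub_mul, sum_mul, sum_mul]
  congr 1 <;> exact sum_congr rfl fun e he => by rw [(mem_filter.1 he).2]

theorem exists_node_balanceDefect_ne_zero (hY : ∀ y ∈ Y, 0 ≤ y)
    (hR : ∀ e ∈ R, e.1 ∈ Y ∧ e.2 ∈ Y) (hflux : ∀ e ∈ R, 0 ≤ flux κ c e)
    (hcopy : ∀ e ∈ R, f e.2 - f e.1 = e.2 - e.1) (h : ∃ y ∈ Y, balanceDefect R κ c y ≠ 0) :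
    ∃ y₀ ∈ Y, balanceDefect R κ c y₀ ≠ 0 ∧ ∀ y ∈ Y, f y = f y₀ → balanceDefect R κ c y ≠ 0 →
      ∑ i, (y i).toNat ≤ R.sup fun e => ∑ i, (e.1 i).toNat := by
  obtain ⟨y, hy, hdy⟩ := h
  let τ : (ι → ℤ) → ℤ := fun y => ∑ i, (f y i - y i)
  obtain ⟨m, hm, hmin⟩ := (Y.filter fun y => balanceDefect R κ c y ≠ 0).exists_min_image τ
    ⟨y, mem_filter.2 ⟨hy, hdy⟩⟩
  have hτ : ∀ e ∈ R, τ e.1 = τ e.2 := fun e he => sum_congr rfl fun i _ => by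
    have := congrFun (hcopy e he) i
    simp only [Pi.sub_apply] at this
    linarith
  have hclosed : ∀ e ∈ R, e.1 ∈ Y.filter (τ · = τ m) ↔ e.2 ∈ Y.filter (τ · = τ m) := by
    intro e he
    simp only [mem_filter, (hR e he).1, (hR e he).2, true_and, hτ e he]
  obtain ⟨y₀, hy₀, hpos⟩ := exists_pos_of_sum_zero_of_exists_nonzero _
    (sum_balanceDefect_eq_zero_of_closed hclosed) ⟨m, mem_filter.2 ⟨(mem_filter.1 hm).1, rfl⟩,
      (mem_filter.1 hm).2⟩
  obtain ⟨e, he, rfl⟩ := exists_source_of_balanceDefect_pos hflux hpos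
  refine ⟨e.1, (hR e he).1, hpos.ne', fun y hy hfy hdy => le_trans ?_
    (le_sup (f := fun e => ∑ i, (e.1 i).toNat) he)⟩
  have hτy : τ e.1 ≤ τ y := (mem_filter.1 hy₀).2 ▸ hmin y (mem_filter.2 ⟨hy, hdy⟩)
  have hsize : ∀ z ∈ Y, ((∑ i, (z i).toNat : ℕ) : ℤ) = ∑ i, f z i - τ z := fun z hz => by
    simp only [τ, sum_sub_distrib, sub_sub_cancel, Nat.cast_sum]
    exact sum_congr rfl fun i _ => Int.toNat_of_nonneg (hY z hz i)
  have := hsize y hy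
  have := hsize e.1 (hR e he).1
  rw [hfy] at *
  omega

theorem balanceDefect_eq_zero {Ξ : Set (ι → ℤ)} (hY : ∀ y ∈ Y, 0 ≤ y)
    (hR : ∀ e ∈ R, e.1 ∈ Y ∧ e.2 ∈ Y) (hκ : ∀ e ∈ R, 0 < κ e)
    (hc : ∀ i, 0 < c i) (hfY : ∀ y ∈ Y, 0 ≤ f y) (hcopy : ∀ e ∈ R, f e.2 - f e.1 = e.2 - e.1)
    (hΞnn : ∀ v ∈ Ξ, 0 ≤ v)
    (hΞ : ∀ p : MvPolynomial ι ℝ, p.totalDegree ≤ R.sup (fun e => ∑ i, (e.1 i).toNat) →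
      (∀ v ∈ Ξ, eval (fun i => (v i : ℝ)) p = 0) → p = 0)
    (hnb : ∀ v ∈ Ξ, ∀ x ∈ Y.image (fun z => f z + v),
      productPoisson c x * ∑ e ∈ R with f e.1 + v = x, massActionRate κ e x
        = ∑ e ∈ R with f e.2 + v = x,
            productPoisson c (f e.1 + v) * massActionRate κ e (f e.1 + v)) :
    ∀ y ∈ Y, balanceDefect R κ c y = 0 := by
  by_contra! h
  have hsrc : ∀ e ∈ R, 0 ≤ e.1 := fun e he => hY _ (hR e he).1
  have hflux : ∀ e ∈ R, 0 ≤ flux κ c e := fun e he => (mul_pos (hκ e he) (vecPow_pos hc _)).le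
  obtain ⟨y₀, hy₀, hd₀, hsmall⟩ := exists_node_balanceDefect_ne_zero hY hR hflux hcopy h
  set X := f y₀
  refine sum_C_mul_fallingFactorialPoly_ne_zero (K := ℝ) X (S := Y.filter (f · = X))
    (b := fun y => balanceDefect R κ c y / vecPow c y)
    (fun y hy => hY y (mem_filter.1 hy).1)
    ⟨y₀, mem_filter.2 ⟨hy₀, rfl⟩, div_ne_zero hd₀ (vecPow_pos hc y₀).ne'⟩ (hΞ _ ?_ fun v hv => ?_)
  · refine totalDegree_sum_C_mul_fallingFactorialPoly_le X fun y hy hb => ?_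
    exact hsmall y (mem_filter.1 hy).1 (mem_filter.1 hy).2 fun h => hb (by rw [h, zero_div])
  · have hx : 0 ≤ X + v := add_nonneg (hfY y₀ hy₀) (hΞnn v hv)
    have hnode := sum_balanceDefect_mul_productPoisson_eq_zero hR hsrc hcopy
      (hnb v hv (X + v) (mem_image_of_mem _ hy₀))
    refine (mul_eq_zero.1 ?_).resolve_left (productPoisson_pos hc hx).ne'
    rw [eval_sum_C_mul_fallingFactorialPoly X _ _ hx, mul_sum, ← hnode]
    refine sum_congr rfl fun y hy => ?_
    have hpow := (vecPow_pos hc y).ne'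
    calc productPoisson c (X + v) * (balanceDefect R κ c y / vecPow c y
          * ∏ i, ((X i + v i).toNat.descFactorial (y i).toNat : ℝ))
        = balanceDefect R κ c y / vecPow c y
          * (productPoisson c (X + v) * vecDescFactorial (X + v) y) := by
          simp only [vecDescFactorial, Pi.add_apply]; ring
      _ = balanceDefect R κ c y * productPoisson c (X + v - y) := by
          rw [productPoisson_mul_vecDescFactorial c hx (hY y (mem_filter.1 hy).1)]
          field_simp

end Balance

theorem node_balanced_shifts_imply_complex_balanced_general
    (n d : ℕ) [DecidableEq (Fin n → ℤ)]
    (C : Finset (Fin n → ℤ)) (R : Finset ((Fin n → ℤ) × (Fin n → ℤ)))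
    (hCnn : ∀ y ∈ C, (0 : Fin n → ℤ) ≤ y)
    (hR : ∀ e ∈ R, e.1 ∈ C ∧ e.2 ∈ C ∧ e.1 ≠ e.2)
    (κ : (Fin n → ℤ) × (Fin n → ℤ) → ℝ) (hκ : ∀ e ∈ R, 0 < κ e)
    (Λ : (Fin n → ℤ) × (Fin n → ℤ) → (Fin n → ℤ) → ℝ)
    (hΛ : ∀ e : (Fin n → ℤ) × (Fin n → ℤ), ∀ x : Fin n → ℤ,
      Λ e x = κ e * (if ∀ i, e.1 i ≤ x i then
          ∏ i, ((Nat.factorial (x i).toNat : ℝ)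
            / (Nat.factorial ((x i - e.1 i).toNat) : ℝ))
        else 0))
    (c : Fin n → ℝ) (hc : ∀ i, 0 < c i)
    (ν : (Fin n → ℤ) → ℝ)
    (hν : ∀ x : Fin n → ℤ, (0 : Fin n → ℤ) ≤ x →
      ν x = (∏ i, c i ^ (x i).toNat) / ∏ i, (Nat.factorial (x i).toNat : ℝ))
    (hν0 : ∀ x : Fin n → ℤ, ¬ (0 : Fin n → ℤ) ≤ x → ν x = 0)
    (hd : d = R.sup (fun e => ∑ i, (e.1 i).toNat))
    (Ξ : Set (Fin n → ℤ)) (hΞnn : ∀ v ∈ Ξ, (0 : Fin n → ℤ) ≤ v)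
    (hΞ : ∀ p : MvPolynomial (Fin n) ℝ, p.totalDegree ≤ d →
      (∀ v ∈ Ξ, MvPolynomial.eval (fun i => ((v i : ℤ) : ℝ)) p = 0) → p = 0)
    (f : (Fin n → ℤ) → (Fin n → ℤ))
    (hfnn : ∀ z ∈ C, (0 : Fin n → ℤ) ≤ f z)
    (hcopy : ∀ e ∈ R, f e.2 - f e.1 = e.2 - e.1)
    (hnb : ∀ v ∈ Ξ, ∀ x ∈ C.image (fun z => f z + v),
      ν x * ∑ e ∈ R.filter (fun e => f e.1 + v = x), Λ e x
        = ∑ e ∈ R.filter (fun e => f e.2 + v = x),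
            ν (f e.1 + v) * Λ e (f e.1 + v)) :
    ∀ y ∈ C, ∀ x : Fin n → ℤ, (0 : Fin n → ℤ) ≤ x →
      ∑ e ∈ R.filter (fun e => e.1 = y), Λ e x * ν x
        = ∑ e ∈ R.filter (fun e => e.2 = y),
            Λ e (x + e.1 - y) * ν (x + e.1 - y) := by
  obtain rfl : Λ = massActionRate κ := funext₂ fun e x => by
    rw [hΛ, massActionRate]
    congr
  obtain rfl : ν = productPoisson c := funext fun x => by
    by_cases hx : 0 ≤ x
    · rw [hν x hx, productPoisson, if_pos hx, prod_div_distrib]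
    · rw [hν0 x hx, productPoisson_of_not_nonneg c hx]
  have hR' : ∀ e ∈ R, e.1 ∈ C ∧ e.2 ∈ C := fun e he => ⟨(hR e he).1, (hR e he).2.1⟩
  have hdefect := balanceDefect_eq_zero hCnn hR' hκ hc hfnn hcopy hΞnn (hd ▸ hΞ) hnb
  intro y hy x _
  rw [← sub_eq_zero, sum_sub_sum_eq_balanceDefect_mul (fun e he => hCnn _ (hR' e he).1),
    hdefect y hy, zero_mul]

/-- For a stochastic mass-action system `(G, K^S_κ)` and
`ν(x) = c^x / x!` with `c > 0`: if there is an active copy `f` of `G` such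
that `f + v` is node balanced with respect to `(K^S_κ, ν)` for every `v` in a
set `Ξ ⊆ ℤ^n_{≥0}` on which the only vanishing polynomial of degree at most
`d = max{‖y‖₁ : y → y' ∈ R}` is the zero polynomial, then `ν` is a complex
balanced measure. -/
theorem node_balanced_shifts_imply_complex_balanced
    (n d : ℕ) [DecidableEq (Fin n → ℤ)]
    (C : Finset (Fin n → ℤ)) (R : Finset ((Fin n → ℤ) × (Fin n → ℤ)))
    (hCnn : ∀ y ∈ C, (0 : Fin n → ℤ) ≤ y)
    (hR : ∀ e ∈ R, e.1 ∈ C ∧ e.2 ∈ C ∧ e.1 ≠ e.2)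
    (hcover : ∀ y ∈ C, ∃ e ∈ R, e.1 = y ∨ e.2 = y)
    (κ : (Fin n → ℤ) × (Fin n → ℤ) → ℝ) (hκ : ∀ e ∈ R, 0 < κ e)
    (Λ : (Fin n → ℤ) × (Fin n → ℤ) → (Fin n → ℤ) → ℝ)
    (hΛ : ∀ e : (Fin n → ℤ) × (Fin n → ℤ), ∀ x : Fin n → ℤ,
      Λ e x = κ e * (if ∀ i, e.1 i ≤ x i then
          ∏ i, ((Nat.factorial (x i).toNat : ℝ)
            / (Nat.factorial ((x i - e.1 i).toNat) : ℝ))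
        else 0))
    (c : Fin n → ℝ) (hc : ∀ i, 0 < c i)
    (ν : (Fin n → ℤ) → ℝ)
    (hν : ∀ x : Fin n → ℤ, (0 : Fin n → ℤ) ≤ x →
      ν x = (∏ i, c i ^ (x i).toNat) / ∏ i, (Nat.factorial (x i).toNat : ℝ))
    (hν0 : ∀ x : Fin n → ℤ, ¬ (0 : Fin n → ℤ) ≤ x → ν x = 0)
    (hd : d = R.sup (fun e => ∑ i, (e.1 i).toNat))
    (Ξ : Set (Fin n → ℤ)) (hΞnn : ∀ v ∈ Ξ, (0 : Fin n → ℤ) ≤ v)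
    (hΞ : ∀ p : MvPolynomial (Fin n) ℝ, p.totalDegree ≤ d →
      (∀ v ∈ Ξ, MvPolynomial.eval (fun i => ((v i : ℤ) : ℝ)) p = 0) → p = 0)
    (f : (Fin n → ℤ) → (Fin n → ℤ))
    (hfnn : ∀ z ∈ C, (0 : Fin n → ℤ) ≤ f z)
    (hcopy : ∀ e ∈ R, f e.2 - f e.1 = e.2 - e.1)
    (hact : ∀ e ∈ R, 0 < Λ e (f e.1))
    (hnb : ∀ v ∈ Ξ, ∀ x ∈ C.image (fun z => f z + v),
      ν x * ∑ e ∈ R.filter (fun e => f e.1 + v = x), Λ e x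
        = ∑ e ∈ R.filter (fun e => f e.2 + v = x),
            ν (f e.1 + v) * Λ e (f e.1 + v)) :
    ∀ y ∈ C, ∀ x : Fin n → ℤ, (0 : Fin n → ℤ) ≤ x →
      ∑ e ∈ R.filter (fun e => e.1 = y), Λ e x * ν x
        = ∑ e ∈ R.filter (fun e => e.2 = y),
            Λ e (x + e.1 - y) * ν (x + e.1 - y) :=
  node_balanced_shifts_imply_complex_balanced_general n d C R hCnn hR κ hκ Λ hΛ c hc ν hν hν0 hd Ξ
    hΞnn hΞ f hfnn hcopy hnb
end

section
/- Consider the stochastic mass-action birth–death system 0 → A (rate κ_1) and 3A → 2A (rate κ_2) on state space ℤ_{≥0}, and let π be a measure supported on {m ∈ ℤ : m ≥ 2} satisfying the detailed balance relation π(m)·κ_1 = π(m+1)·κ_2·(m+1)m(m−1) for all m ≥ 2. Then the copy f defined by f(0) = f(2A) = 2, f(A) = f(3A) = 3 is node balanced with respect to (K^S_κ, π), and likewise every shifted copy f + v for v ∈ ℤ_{≥0} is node balanced, yet π is not a complex balanced measure. -/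
/-- For the stochastic mass-action birth–death system
`0 → A` (rate `κ₁`) and `3A → 2A` (rate `κ₂`), with `π` supported on
`{m : ℤ | m ≥ 2}` and satisfying detailed balance
`π(m) κ₁ = π(m+1) κ₂ (m+1) m (m-1)` for `m ≥ 2`, the copy `f` with
`f 0 = f 2 = 2`, `f 1 = f 3 = 3`, as well as every shifted copy `f + v`
(`v ≥ 0`), is node balanced with respect to `(K^S_κ, π)`, yet `π` is not a
complex balanced measure. -/
theorem node_balanced_copy_without_complex_balance
    (κ₁ κ₂ : ℝ) (hκ₁ : 0 < κ₁) (hκ₂ : 0 < κ₂)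
    (lam : ℤ × ℤ → ℤ → ℝ)
    (hlam1 : ∀ m : ℤ, lam (0, 1) m = if 0 ≤ m then κ₁ else 0)
    (hlam2 : ∀ m : ℤ, lam (3, 2) m =
      if 3 ≤ m then κ₂ * (m * (m - 1) * (m - 2)) else 0)
    (π : ℤ → ℝ)
    (hπ0 : ∀ m : ℤ, m < 2 → π m = 0)
    (hπpos : ∀ m : ℤ, 2 ≤ m → 0 < π m)
    (hdb : ∀ m : ℤ, 2 ≤ m →
      π m * κ₁ = π (m + 1) * (κ₂ * ((m + 1) * m * (m - 1))))
    (f : ℤ → ℤ) (hf0 : f 0 = 2) (hf1 : f 1 = 3) (hf2 : f 2 = 2) (hf3 : f 3 = 3) :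
    (∀ v : ℤ, 0 ≤ v →
      ∀ x ∈ ({0, 1, 2, 3} : Finset ℤ).image (fun z => f z + v),
        π x * ∑ e ∈ ({(0, 1), (3, 2)} : Finset (ℤ × ℤ)).filter
            (fun e => f e.1 + v = x), lam e x
          = ∑ e ∈ ({(0, 1), (3, 2)} : Finset (ℤ × ℤ)).filter
              (fun e => f e.2 + v = x),
              π (f e.1 + v) * lam e (f e.1 + v))
    ∧
    ¬ (∀ y ∈ ({0, 1, 2, 3} : Finset ℤ), ∀ x : ℤ, 0 ≤ x →
      ∑ e ∈ ({(0, 1), (3, 2)} : Finset (ℤ × ℤ)).filter (fun e => e.1 = y),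
          lam e x * π x
        = ∑ e ∈ ({(0, 1), (3, 2)} : Finset (ℤ × ℤ)).filter (fun e => e.2 = y),
            lam e (x + e.1 - y) * π (x + e.1 - y)) := by
  constructor
  · intro v hv x hx
    simp only [Finset.mem_image, Finset.mem_insert, Finset.mem_singleton] at hx
    obtain ⟨z, hz, hzx⟩ := hx
    have hfz : f z = 2 ∨ f z = 3 := by
      rcases hz with h|h|h|h <;> subst h <;> simp [hf0, hf1, hf2, hf3]
    have hx2 : x = 2 + v ∨ x = 3 + v := by
      rcases hfz with h|h <;> [left; right] <;> omega
    have key := hdb (2 + v) (by omega)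
    push_cast at key
    have e1 : lam (0, 1) (2 + v) = κ₁ := by rw [hlam1, if_pos (by omega)]
    have e2 : lam (3, 2) (3 + v) =
        κ₂ * ((3 + (v:ℝ)) * (3 + v - 1) * (3 + v - 2)) := by
      rw [hlam2, if_pos (by omega)]; push_cast; ring
    rw [show (2:ℤ) + v + 1 = 3 + v by ring] at key
    rcases hx2 with h|h <;> subst h <;>
      simp only [Finset.filter_insert, Finset.filter_singleton, hf0, hf1, hf2, hf3,
        add_left_inj] <;>
      norm_num [e1, e2] <;>
      simp only [hf0, hf3, e1, e2] <;>
      first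
      | linear_combination key
      | linear_combination -key
  · intro h
    have h0 := h 0 (by simp) 2 (by norm_num)
    have hfil1 : (({(0, 1), (3, 2)} : Finset (ℤ × ℤ)).filter (fun e => e.1 = 0))
        = {(0, 1)} := by decide
    have hfil2 : (({(0, 1), (3, 2)} : Finset (ℤ × ℤ)).filter (fun e => e.2 = 0))
        = ∅ := by decide
    rw [hfil1, hfil2, Finset.sum_singleton, Finset.sum_empty, hlam1,
      if_pos (by norm_num)] at h0
    have := hπpos 2 le_rfl
    nlinarith
end

section
/- Let C ⊆ ℤ^n_{≥0} be the complex set of a weakly reversible reaction network G, and consider the network G̃ with complexes y + A_y and reactions y + A_y → y' + A_{y'}. For any x ∈ ℤ^n_{≥0} and complex y with x ≥ y, the closed irreducible set of the associated continuous-time Markov chain containing the state (x, e_y) ∈ ℤ^n_{≥0} × ℤ^m_{≥0} is exactly {(x + ỹ − y, e_{ỹ}) : ỹ ∈ C_y}, where C_y is the connected component of the reaction graph (C,R) containing y, provided the kinetics satisfies λ̃_{y+A_y → y'+A_{y'}}(x,u) = λ_{y→y'}(x)·u_{A_y} with λ_{y→y'}(x̃) > 0 iff x̃ ≥ y. -/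
/-!
Starting from `(x, e_y)` only the reactions out of the complex whose count is `1` can fire,
since the rate `λ_{y→y'}(x) u_{A_y}` vanishes when `u_{A_y} = 0`; firing `c → d` moves
`(x + c - y, e_c)` to `(x + d - y, e_d)`. The state `x + c - y ≥ c` always carries enough
molecules, so every reaction of `c` is available. Hence the states reachable from `(x, e_y)` are
exactly the `(x + d - y, e_d)` with `d` reachable from `y` along directed reactions, and weak
reversibility makes directed reachability the same as lying in the linkage class of `y`.
-/

namespace Relation

variable {α β : Type*}

theorem reflTransGen_symmGen_eq_reflTransGen {r : α → α → Prop}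
    (hrev : ∀ a b, r a b → ReflTransGen r b a) :
    ReflTransGen (SymmGen r) = ReflTransGen r := by
  funext a b
  refine propext ⟨fun h => ?_, ReflTransGen.mono (fun _ _ => SymmGen.of_rel) a b⟩
  induction h with
  | refl => exact .refl
  | tail _ hbc ih => exact hbc.elim ih.tail (ih.trans <| hrev _ _ ·)

theorem reflTransGen_iff_exists_of_step_iff {r : α → α → Prop} {s : β → β → Prop} {f : α → β}
    (hstep : ∀ a q, s (f a) q ↔ ∃ b, r a b ∧ q = f b) (a : α) (q : β) :
    ReflTransGen s (f a) q ↔ ∃ b, ReflTransGen r a b ∧ q = f b := by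
  constructor
  · intro h
    induction h with
    | refl => exact ⟨a, .refl, rfl⟩
    | tail _ hpq ih =>
      obtain ⟨b, hab, rfl⟩ := ih
      obtain ⟨c, hbc, rfl⟩ := (hstep b _).1 hpq
      exact ⟨c, hab.tail hbc, rfl⟩
  · rintro ⟨b, hab, rfl⟩
    exact hab.lift f fun b c hbc => (hstep b _).2 ⟨c, hbc, rfl⟩

end Relation

open Relation

section TildeNetwork

variable {V : Type*} [AddCommGroup V] [DecidableEq V]

/-- A state is `(x, u)` with `u z` the count of the auxiliary species `A_z`; the reaction
`e = (y, y')` fires at rate `Λ e x * u y`. -/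
def tildeStep (R : Set (V × V)) (Λ : V × V → V → ℝ) (p q : V × (V → ℤ)) : Prop :=
  ∃ e ∈ R, 0 < Λ e p.1 * (p.2 e.1 : ℝ) ∧
    q.1 = p.1 + e.2 - e.1 ∧
    q.2 = fun z => p.2 z - (if z = e.1 then 1 else 0) + (if z = e.2 then 1 else 0)

def complexState (x y c : V) : V × (V → ℤ) :=
  (x + c - y, fun z => if z = c then 1 else 0)

theorem tildeStep_complexState_iff (R : Set (V × V)) (Λ : V × V → V → ℝ) (x y c : V)
    (q : V × (V → ℤ)) :
    tildeStep R Λ (complexState x y c) q ↔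
      ∃ d, (c, d) ∈ R ∧ 0 < Λ (c, d) (x + c - y) ∧ q = complexState x y d := by
  constructor
  · rintro ⟨⟨c', d⟩, he, hpos, hq₁, hq₂⟩
    obtain rfl : c' = c := by
      by_contra hne
      simp [complexState, hne] at hpos
    refine ⟨d, he, by simpa [complexState] using hpos, Prod.ext ?_ ?_⟩
    · simp only [hq₁, complexState]
      abel
    · funext z
      simp [hq₂, complexState]
  · rintro ⟨d, he, hpos, rfl⟩
    refine ⟨(c, d), he, by simpa [complexState] using hpos, ?_, ?_⟩
    · simp only [complexState]
      abel
    · funext z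
      simp [complexState]

variable [PartialOrder V] [IsOrderedAddMonoid V]

theorem reflTransGen_tildeStep_complexState_iff {R : Set (V × V)} {Λ : V × V → V → ℝ}
    (hΛ : ∀ e ∈ R, ∀ xt : V, 0 < Λ e xt ↔ e.1 ≤ xt) {x y : V} (hx : y ≤ x) (c : V)
    (q : V × (V → ℤ)) :
    ReflTransGen (tildeStep R Λ) (complexState x y c) q ↔
      ∃ d, ReflTransGen (fun a b => (a, b) ∈ R) c d ∧ q = complexState x y d := by
  refine reflTransGen_iff_exists_of_step_iff (fun a q => ?_) c q
  have hle : a ≤ x + a - y := by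
    simpa only [sub_add_eq_add_sub] using le_add_of_nonneg_left (a := a) (sub_nonneg.2 hx)
  rw [tildeStep_complexState_iff]
  exact exists_congr fun d => ⟨fun ⟨he, _, hq⟩ => ⟨he, hq⟩,
    fun ⟨he, hq⟩ => ⟨he, (hΛ _ he _).2 hle, hq⟩⟩

end TildeNetwork

theorem tilde_closed_irreducible_set_general
    (n : ℕ) [DecidableEq (Fin n → ℤ)]
    (C : Finset (Fin n → ℤ)) (R : Finset ((Fin n → ℤ) × (Fin n → ℤ)))
    (hR : ∀ e ∈ R, e.1 ∈ C ∧ e.2 ∈ C ∧ e.1 ≠ e.2)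
    (hwr : ∀ e ∈ R, Relation.ReflTransGen (fun a b => (a, b) ∈ R) e.2 e.1)
    (Λ : (Fin n → ℤ) × (Fin n → ℤ) → (Fin n → ℤ) → ℝ)
    (hΛ : ∀ e ∈ R, ∀ xt : Fin n → ℤ, 0 < Λ e xt ↔ e.1 ≤ xt)
    (Step : ((Fin n → ℤ) × ((Fin n → ℤ) → ℤ)) →
            ((Fin n → ℤ) × ((Fin n → ℤ) → ℤ)) → Prop)
    (hStep : ∀ p q : (Fin n → ℤ) × ((Fin n → ℤ) → ℤ),
      Step p q ↔ ∃ e ∈ R, 0 < Λ e p.1 * (p.2 e.1 : ℝ) ∧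
        q.1 = p.1 + e.2 - e.1 ∧
        q.2 = fun z => p.2 z - (if z = e.1 then 1 else 0)
          + (if z = e.2 then 1 else 0))
    (y : Fin n → ℤ)
    (x : Fin n → ℤ) (hx : y ≤ x)
    (Γ : Set ((Fin n → ℤ) × ((Fin n → ℤ) → ℤ)))
    (hΓ : Γ = {p | ∃ yt ∈ C,
      Relation.ReflTransGen (fun a b => (a, b) ∈ R ∨ (b, a) ∈ R) y yt ∧
      p = (x + yt - y, fun z => if z = yt then 1 else 0)}) :
    ∀ p ∈ Γ, ∀ q : (Fin n → ℤ) × ((Fin n → ℤ) → ℤ),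
      Relation.ReflTransGen Step p q ↔ q ∈ Γ := by
  obtain rfl : Step = tildeStep (R : Set _) Λ := by
    funext p q
    exact propext (hStep p q)
  have hlink : ReflTransGen (fun a b => (a, b) ∈ R ∨ (b, a) ∈ R) =
      ReflTransGen fun a b => (a, b) ∈ R :=
    reflTransGen_symmGen_eq_reflTransGen fun a b h => hwr (a, b) h
  subst hΓ
  rintro _ ⟨a, haC, hya, rfl⟩ q
  have hay : ReflTransGen (fun a b => (a, b) ∈ R ∨ (b, a) ∈ R) a y :=
    (ReflTransGen.stdSymm (r := SymmGen fun a b => (a, b) ∈ R)).symm _ _ hya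
  simp only [Set.mem_ofPred_eq, hlink] at hya hay ⊢
  rw [← complexState, reflTransGen_tildeStep_complexState_iff hΛ hx]
  constructor
  · rintro ⟨b, hab, rfl⟩
    refine ⟨b, ?_, hya.trans hab, rfl⟩
    rcases hab.cases_tail with rfl | ⟨c, -, hcb⟩
    exacts [haC, (hR _ hcb).2.1]
  · rintro ⟨b, -, hyb, rfl⟩
    exact ⟨b, hay.trans hyb, rfl⟩

/-- For a weakly reversible network `G` and the extended network
`G̃` (complexes `y + A_y`, reactions `y + A_y → y' + A_{y'}` with rates
`λ̃(x,u) = λ_{y→y'}(x) u_{A_y}` where `λ_{y→y'}(x̃) > 0 iff x̃ ≥ y`), for any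
state `x ≥ y` with `y ∈ C`, the closed irreducible set of the associated CTMC
containing `(x, e_y)` is exactly `{(x + ỹ - y, e_{ỹ}) : ỹ ∈ C_y}`, where `C_y`
is the connected component of the reaction graph containing `y`. -/
theorem tilde_closed_irreducible_set
    (n : ℕ) [DecidableEq (Fin n → ℤ)]
    (C : Finset (Fin n → ℤ)) (R : Finset ((Fin n → ℤ) × (Fin n → ℤ)))
    (hCnn : ∀ y ∈ C, (0 : Fin n → ℤ) ≤ y)
    (hR : ∀ e ∈ R, e.1 ∈ C ∧ e.2 ∈ C ∧ e.1 ≠ e.2)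
    (hwr : ∀ e ∈ R, Relation.ReflTransGen (fun a b => (a, b) ∈ R) e.2 e.1)
    (Λ : (Fin n → ℤ) × (Fin n → ℤ) → (Fin n → ℤ) → ℝ)
    (hΛnn : ∀ e ∈ R, ∀ xt : Fin n → ℤ, 0 ≤ Λ e xt)
    (hΛ : ∀ e ∈ R, ∀ xt : Fin n → ℤ, 0 < Λ e xt ↔ e.1 ≤ xt)
    (Step : ((Fin n → ℤ) × ((Fin n → ℤ) → ℤ)) →
            ((Fin n → ℤ) × ((Fin n → ℤ) → ℤ)) → Prop)
    (hStep : ∀ p q : (Fin n → ℤ) × ((Fin n → ℤ) → ℤ),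
      Step p q ↔ ∃ e ∈ R, 0 < Λ e p.1 * (p.2 e.1 : ℝ) ∧
        q.1 = p.1 + e.2 - e.1 ∧
        q.2 = fun z => p.2 z - (if z = e.1 then 1 else 0)
          + (if z = e.2 then 1 else 0))
    (y : Fin n → ℤ) (hy : y ∈ C)
    (x : Fin n → ℤ) (hx : y ≤ x)
    (Γ : Set ((Fin n → ℤ) × ((Fin n → ℤ) → ℤ)))
    (hΓ : Γ = {p | ∃ yt ∈ C,
      Relation.ReflTransGen (fun a b => (a, b) ∈ R ∨ (b, a) ∈ R) y yt ∧
      p = (x + yt - y, fun z => if z = yt then 1 else 0)}) :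
    ∀ p ∈ Γ, ∀ q : (Fin n → ℤ) × ((Fin n → ℤ) → ℤ),
      Relation.ReflTransGen Step p q ↔ q ∈ Γ :=
  tilde_closed_irreducible_set_general n C R hR hwr Λ hΛ Step hStep y x hx Γ hΓ
end
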